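/- arXiv:1508.04918 — 8 statements merged into one kernel-verified Lean document; each statement's English description precedes it below -/
import Mathlib

section
/- For all real x, y ≥ 0 and all natural numbers n, m, the double integral ∫₀¹∫₀¹ (x(1−u)+yv)^n (y(1−v)+xu)^m du dv equals n! · m! · Σ_{k=0}^{n} Σ_{l=0}^{m} x^{n−k+l} y^{m−l+k} / ((n−k+l+1)! (m−l+k+1)!). Equivalently, with D(n,m;x,y) = x^n y^m/((n+1)!(m+1)!), the transition operator P f(x,y) = ∫₀¹∫₀¹ f(x(1−u)+yv, y(1−v)+xu) du dv satisfies P D(n,m;·,·)(x,y) = Σ_{k=0}^{n} Σ_{l=0}^{m} (1/((n+1)(m+1))) D(n−k+l, m−l+k; x,y). -/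
open MeasureTheory Finset Nat

/-! Expanding both binomials writes the integrand as a sum of products `f(u) g(v)`, each factor
of the form `t ^ a * (1 - t) ^ b`, so the double integral is a sum of products of Beta integrals
`B(a + 1, b + 1) = a! b! / (a + b + 1)!`, and the binomial coefficients cancel against the
factorials they produce. -/

theorem integral_pow_mul_one_sub_pow (a b : ℕ) :
    ∫ u in (0:ℝ)..1, u ^ a * (1 - u) ^ b = (a ! * b ! / (a + b + 1)! : ℝ) := by
  have h := Complex.betaIntegral_eq_Gamma_mul_div (a + 1) (b + 1)
    (by simp; positivity) (by simp; positivity)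
  rw [show (a + 1 + (b + 1) : ℂ) = ((a + b + 1 : ℕ) : ℂ) + 1 by push_cast; ring] at h
  simp only [Complex.betaIntegral, add_sub_cancel_right, Complex.cpow_natCast,
    Complex.Gamma_nat_eq_factorial] at h
  apply Complex.ofReal_injective
  rw [← intervalIntegral.integral_ofReal]
  push_cast
  exact h

theorem integral_integral_sum_mul {ι : Type*} (s : Finset ι) (f g : ι → ℝ → ℝ) {a b c d : ℝ}
    (hf : ∀ i ∈ s, IntervalIntegrable (f i) volume a b)
    (hg : ∀ i ∈ s, IntervalIntegrable (g i) volume c d) :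
    ∫ u in a..b, ∫ v in c..d, ∑ i ∈ s, f i u * g i v
      = ∑ i ∈ s, (∫ u in a..b, f i u) * ∫ v in c..d, g i v := by
  have inner (u : ℝ) : ∫ v in c..d, ∑ i ∈ s, f i u * g i v
      = ∑ i ∈ s, f i u * ∫ v in c..d, g i v := by
    rw [intervalIntegral.integral_finsetSum fun i hi => (hg i hi).const_mul _]
    simp only [intervalIntegral.integral_const_mul]
  simp only [inner]
  rw [intervalIntegral.integral_finsetSum fun i hi => (hf i hi).mul_const _]
  simp only [intervalIntegral.integral_mul_const]

theorem exchange_integrand_eq_sum (x y u v : ℝ) (n m : ℕ) :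
    (x * (1 - u) + y * v) ^ n * (y * (1 - v) + x * u) ^ m
      = ∑ p ∈ range (n + 1) ×ˢ range (m + 1),
          (n.choose p.1 * m.choose p.2 * x ^ (n - p.1 + p.2) * y ^ (m - p.2 + p.1)
            * (u ^ p.2 * (1 - u) ^ (n - p.1))) * (v ^ p.1 * (1 - v) ^ (m - p.2)) := by
  rw [sum_product, add_comm, add_pow, add_comm (y * (1 - v)), add_pow, sum_mul_sum]
  refine sum_congr rfl fun k _ => sum_congr rfl fun l _ => ?_
  simp only [mul_pow, pow_add]
  ring

theorem choose_mul_choose_mul_beta {n m k l : ℕ} (hk : k ≤ n) (hl : l ≤ m) :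
    (n.choose k * m.choose l : ℝ) * (l ! * (n - k)! / (l + (n - k) + 1)!)
        * (k ! * (m - l)! / (k + (m - l) + 1)!)
      = n ! * m ! / ((n - k + l + 1)! * (m - l + k + 1)!) := by
  rw [Nat.cast_choose ℝ hk, Nat.cast_choose ℝ hl, add_comm l, add_comm k]
  field_simp

theorem immediate_exchange_transition_expansion_general
    (x y : ℝ) (n m : ℕ) :
    (∫ u in (0:ℝ)..1, ∫ v in (0:ℝ)..1,
        (x * (1 - u) + y * v) ^ n * (y * (1 - v) + x * u) ^ m)
      = (Nat.factorial n : ℝ) * (Nat.factorial m : ℝ) *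
        ∑ k ∈ Finset.range (n + 1), ∑ l ∈ Finset.range (m + 1),
          x ^ (n - k + l) * y ^ (m - l + k) /
            ((Nat.factorial (n - k + l + 1) : ℝ) * (Nat.factorial (m - l + k + 1) : ℝ)) := by
  simp only [exchange_integrand_eq_sum]
  rw [integral_integral_sum_mul _ _ _
      (fun _ _ => (by fun_prop : Continuous _).intervalIntegrable _ _)
      (fun _ _ => (by fun_prop : Continuous _).intervalIntegrable _ _),
    ← sum_product', mul_sum]
  refine sum_congr rfl fun ⟨k, l⟩ hkl => ?_
  obtain ⟨hk, hl⟩ : k ≤ n ∧ l ≤ m := by simp only [mem_product, mem_range] at hkl; omega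
  rw [intervalIntegral.integral_const_mul, integral_pow_mul_one_sub_pow,
    integral_pow_mul_one_sub_pow]
  linear_combination x ^ (n - k + l) * y ^ (m - l + k) * choose_mul_choose_mul_beta hk hl

/-- For the Immediate Exchange Model, the transition operator applied to the
duality polynomial `(x,y) ↦ xⁿ yᵐ` expands as a double sum:
∫₀¹∫₀¹ (x(1−u)+yv)^n (y(1−v)+xu)^m du dv
  = n! m! Σ_{k=0}^{n} Σ_{l=0}^{m} x^{n−k+l} y^{m−l+k} / ((n−k+l+1)! (m−l+k+1)!). -/
theorem immediate_exchange_transition_expansion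
    (x y : ℝ) (hx : 0 ≤ x) (hy : 0 ≤ y) (n m : ℕ) :
    (∫ u in (0:ℝ)..1, ∫ v in (0:ℝ)..1,
        (x * (1 - u) + y * v) ^ n * (y * (1 - v) + x * u) ^ m)
      = (Nat.factorial n : ℝ) * (Nat.factorial m : ℝ) *
        ∑ k ∈ Finset.range (n + 1), ∑ l ∈ Finset.range (m + 1),
          x ^ (n - k + l) * y ^ (m - l + k) /
            ((Nat.factorial (n - k + l + 1) : ℝ) * (Nat.factorial (m - l + k + 1) : ℝ)) :=
  immediate_exchange_transition_expansion_general x y n m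
end

section
/- For every θ > 0, the product of two Gamma distributions with shape 2 and scale θ is invariant for the Immediate Exchange Model: for every bounded measurable function f on [0,∞)², ∫∫ (∫₀¹∫₀¹ f(x(1−u)+yv, y(1−v)+xu) du dv) ν_θ(dx) ν_θ(dy) = ∫∫ f(x,y) ν_θ(dx) ν_θ(dy), where ν_θ is the measure on [0,∞) with density x e^{−x/θ}/θ². -/
open MeasureTheory

/-- The Gamma distribution with shape parameter 2 and scale parameter θ:
the measure on [0,∞) with density `x e^{−x/θ}/θ²`. -/
noncomputable def gammaShape2 (θ : ℝ) : Measure ℝ :=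
  (volume.restrict (Set.Ici (0 : ℝ))).withDensity
    (fun x => ENNReal.ofReal (x * Real.exp (-x / θ) / θ ^ 2))

/-!
If `X` has law `Γ(2, θ)` and `U` is uniform on `(0, 1]`, independent of `X`, then `X (1 - U)`
and `X U` are independent `Exp(θ)` variables: the map `(x, u) ↦ (x (1 - u), x u)` has Jacobian
`x`, which is exactly the factor `x` in the `Γ(2, θ)` density. Since this map preserves the sum,
the sum of two independent `Exp(θ)` variables is `Γ(2, θ)`. One exchange step cuts each agent's
wealth into two independent exponential pieces and gives each agent the sum of one of its own
pieces and one of the other agent's, so the pair of wealths is again `Γ(2, θ) ⊗ Γ(2, θ)`.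
-/

open Real Set ProbabilityTheory
open scoped ENNReal

section ProdProd

variable {α β γ δ : Type*} [MeasurableSpace α] [MeasurableSpace β] [MeasurableSpace γ]
  [MeasurableSpace δ]

lemma lintegral_prod_prod (μa : Measure α) {μb : Measure β} {μc : Measure γ} {μd : Measure δ}
    [SFinite μb] [SFinite μc] [SFinite μd] {φ : (α × β) × γ × δ → ℝ≥0∞} (hφ : Measurable φ) :
    ∫⁻ z, φ z ∂(μa.prod μb).prod (μc.prod μd)
      = ∫⁻ a, ∫⁻ b, ∫⁻ c, ∫⁻ d, φ ((a, b), (c, d)) ∂μd ∂μc ∂μb ∂μa := by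
  rw [lintegral_prod _ hφ.aemeasurable, lintegral_prod _ hφ.lintegral_prod_right'.aemeasurable]
  refine lintegral_congr fun a ↦ lintegral_congr fun b ↦ ?_
  exact lintegral_prod _ (hφ.comp measurable_prodMk_left).aemeasurable

theorem measurePreserving_prodProdProdComm (μa : Measure α) (μb : Measure β) (μc : Measure γ)
    (μd : Measure δ) [SFinite μb] [SFinite μc] [SFinite μd] :
    MeasurePreserving (fun z : (α × β) × γ × δ ↦ ((z.1.1, z.2.1), (z.1.2, z.2.2)))
      ((μa.prod μb).prod (μc.prod μd)) ((μa.prod μc).prod (μb.prod μd)) := by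
  refine ⟨by fun_prop, Measure.ext_of_lintegral _ fun φ hφ ↦ ?_⟩
  rw [lintegral_map hφ (by fun_prop), lintegral_prod_prod _ (by fun_prop),
    lintegral_prod_prod _ hφ]
  refine lintegral_congr fun a ↦ lintegral_lintegral_swap ?_
  exact (hφ.comp (f := fun q : (β × γ) × δ ↦ ((a, q.1.2), (q.1.1, q.2))) (by fun_prop))
    |>.lintegral_prod_right'.aemeasurable

end ProdProd

def fracSplit (p : ℝ × ℝ) : ℝ × ℝ := (p.1 * (1 - p.2), p.1 * p.2)

@[fun_prop]
lemma measurable_fracSplit : Measurable fracSplit := by unfold fracSplit; fun_prop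

lemma fracSplit_fst_add_snd (p : ℝ × ℝ) : (fracSplit p).1 + (fracSplit p).2 = p.1 := by
  simp only [fracSplit]; ring

noncomputable def fderivFracSplit (p : ℝ × ℝ) : ℝ × ℝ →L[ℝ] ℝ × ℝ :=
  (Matrix.toLin (.finTwoProd ℝ) (.finTwoProd ℝ)
    !![1 - p.2, -p.1; p.2, p.1]).toContinuousLinearMap

lemma hasFDerivAt_fracSplit (p : ℝ × ℝ) :
    HasFDerivAt fracSplit (fderivFracSplit p) p := by
  unfold fderivFracSplit
  rw [Matrix.toLin_finTwoProd_toContinuousLinearMap]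
  have hx : HasFDerivAt (fun q : ℝ × ℝ ↦ q.1) (ContinuousLinearMap.fst ℝ ℝ ℝ) p := hasFDerivAt_fst
  have hu : HasFDerivAt (fun q : ℝ × ℝ ↦ q.2) (ContinuousLinearMap.snd ℝ ℝ ℝ) p := hasFDerivAt_snd
  refine ((hx.mul ((hasFDerivAt_const 1 p).sub hu)).prodMk (hx.mul hu)).congr_fderiv ?_
  ext <;> simp

lemma det_fderivFracSplit (p : ℝ × ℝ) : (fderivFracSplit p).det = p.1 := by
  simp only [fderivFracSplit, LinearMap.det_toContinuousLinearMap, LinearMap.det_toLin,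
    Matrix.det_fin_two_of]
  ring

lemma injOn_fracSplit : InjOn fracSplit {p | p.1 ≠ 0} := by
  rintro ⟨x, u⟩ (hx : x ≠ 0) ⟨y, v⟩ - h
  simp only [fracSplit, Prod.mk.injEq] at h
  have hxy : x = y := by linear_combination h.1 + h.2
  subst hxy
  exact Prod.ext rfl (mul_left_cancel₀ hx h.2)

lemma image_fracSplit_Ioi_prod_Ioo : fracSplit '' (Ioi 0 ×ˢ Ioo 0 1) = Ioi 0 ×ˢ Ioi 0 := by
  ext ⟨a, b⟩
  simp only [mem_image, mem_prod, mem_Ioi, mem_Ioo, fracSplit, Prod.exists, Prod.mk.injEq]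
  constructor
  · rintro ⟨x, u, ⟨hx, hu0, hu1⟩, rfl, rfl⟩
    exact ⟨mul_pos hx (by linarith), mul_pos hx hu0⟩
  · rintro ⟨ha, hb⟩
    refine ⟨a + b, b / (a + b), ⟨by positivity, by positivity, ?_⟩, ?_, ?_⟩
    · rw [div_lt_one (by positivity)]; linarith
    · field_simp; ring
    · field_simp

lemma lintegral_comp_fracSplit (g : ℝ × ℝ → ℝ≥0∞) :
    ∫⁻ p in Ioi 0 ×ˢ Ioo 0 1, ENNReal.ofReal p.1 * g (fracSplit p)
      = ∫⁻ q in Ioi 0 ×ˢ Ioi 0, g q := by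
  rw [← image_fracSplit_Ioi_prod_Ioo, lintegral_image_eq_lintegral_abs_det_fderiv_mul volume
    (measurableSet_Ioi.prod measurableSet_Ioo)
    (fun p _ ↦ (hasFDerivAt_fracSplit p).hasFDerivWithinAt)
    (injOn_fracSplit.mono fun p hp ↦ (mem_Ioi.mp hp.1).ne')]
  refine setLIntegral_congr_fun (measurableSet_Ioi.prod measurableSet_Ioo) fun p hp ↦ ?_
  rw [det_fderivFracSplit, abs_of_pos hp.1]

theorem map_fracSplit_withDensity (h : ℝ → ℝ≥0∞) (hh : Measurable h) :
    (((volume.restrict (Ici 0)).withDensity fun x ↦ ENNReal.ofReal x * h x).prod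
        (volume.restrict (Ioc (0 : ℝ) 1))).map fracSplit
      = (volume.restrict (Ici (0 : ℝ) ×ˢ Ici (0 : ℝ))).withDensity fun q ↦ h (q.1 + q.2) := by
  have hdom : ((volume.restrict (Ici 0)).withDensity fun x ↦ ENNReal.ofReal x * h x).prod
      (volume.restrict (Ioc (0 : ℝ) 1))
        = (volume.restrict (Ioi (0 : ℝ) ×ˢ Ioo (0 : ℝ) 1)).withDensity
          fun p ↦ ENNReal.ofReal p.1 * h p.1 := by
    rw [prod_withDensity_left (by fun_prop), ← Measure.restrict_congr_set Ioi_ae_eq_Ici,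
      ← Measure.restrict_congr_set Ioo_ae_eq_Ioc, Measure.prod_restrict, Measure.volume_eq_prod]
  have hcod : volume.restrict (Ici (0 : ℝ) ×ˢ Ici (0 : ℝ)) =
      volume.restrict (Ioi (0 : ℝ) ×ˢ Ioi (0 : ℝ)) := by
    rw [Measure.volume_eq_prod]
    exact Measure.restrict_congr_set (Measure.set_prod_ae_eq Ioi_ae_eq_Ici Ioi_ae_eq_Ici).symm
  refine Measure.ext_of_lintegral _ fun φ hφ ↦ ?_
  rw [hdom, hcod, lintegral_map hφ measurable_fracSplit,
    lintegral_withDensity_eq_lintegral_mul _ (by fun_prop) (g := fun p ↦ φ (fracSplit p))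
      (by fun_prop),
    lintegral_withDensity_eq_lintegral_mul _ (by fun_prop) hφ, ← lintegral_comp_fracSplit]
  refine setLIntegral_congr_fun (measurableSet_Ioi.prod measurableSet_Ioo) fun p _ ↦ ?_
  simp only [Pi.mul_apply, fracSplit_fst_add_snd, mul_assoc]

instance (a r : ℝ) : SFinite (gammaMeasure a r) := by unfold gammaMeasure; infer_instance

instance (r : ℝ) : SFinite (expMeasure r) := by unfold expMeasure; infer_instance

lemma gammaMeasure_two_eq_withDensity (r : ℝ) :
    gammaMeasure 2 r = (volume.restrict (Ici 0)).withDensity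
      fun x ↦ ENNReal.ofReal x * ENNReal.ofReal (r ^ 2 * exp (-(r * x))) := by
  rw [gammaMeasure, ← withDensity_indicator measurableSet_Ici]
  congr 1
  funext x
  by_cases hx : 0 ≤ x
  · rw [indicator_of_mem (mem_Ici.mpr hx), gammaPDF_of_nonneg hx, ← ENNReal.ofReal_mul hx,
      Gamma_two, show (2 : ℝ) - 1 = 1 by norm_num, rpow_one, rpow_two]
    ring_nf
  · rw [indicator_of_notMem (by simpa using hx), gammaPDF_of_neg (not_le.mp hx)]

lemma expMeasure_eq_withDensity (r : ℝ) :
    expMeasure r = (volume.restrict (Ici 0)).withDensity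
      fun x ↦ ENNReal.ofReal (r * exp (-(r * x))) := by
  rw [expMeasure, gammaMeasure, ← withDensity_indicator measurableSet_Ici]
  congr 1
  funext x
  by_cases hx : 0 ≤ x
  · rw [indicator_of_mem (mem_Ici.mpr hx), ← exponentialPDF_of_nonneg hx]
    rfl
  · rw [indicator_of_notMem (by simpa using hx), gammaPDF_of_neg (not_le.mp hx)]

variable {r : ℝ}

theorem measurePreserving_fracSplit (hr : 0 ≤ r) :
    MeasurePreserving fracSplit ((gammaMeasure 2 r).prod (volume.restrict (Ioc 0 1)))
      ((expMeasure r).prod (expMeasure r)) := by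
  refine ⟨measurable_fracSplit, ?_⟩
  rw [gammaMeasure_two_eq_withDensity, map_fracSplit_withDensity _ (by fun_prop),
    expMeasure_eq_withDensity, prod_withDensity (by fun_prop) (by fun_prop),
    Measure.prod_restrict, ← Measure.volume_eq_prod]
  congr 1
  funext q
  rw [← ENNReal.ofReal_mul (by positivity), mul_add, neg_add, exp_add]
  ring_nf

theorem measurePreserving_add_expMeasure (hr : 0 ≤ r) :
    MeasurePreserving (fun p : ℝ × ℝ ↦ p.1 + p.2) ((expMeasure r).prod (expMeasure r))
      (gammaMeasure 2 r) := by
  refine ⟨by fun_prop, ?_⟩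
  rw [← (measurePreserving_fracSplit hr).map_eq, Measure.map_map (by fun_prop) measurable_fracSplit]
  simp only [Function.comp_def, fracSplit_fst_add_snd]
  rw [Measure.map_fst_prod]
  simp


def iemStep (z : (ℝ × ℝ) × ℝ × ℝ) : ℝ × ℝ :=
  (z.1.1 * (1 - z.2.1) + z.1.2 * z.2.2, z.1.2 * (1 - z.2.2) + z.1.1 * z.2.1)

@[fun_prop]
lemma measurable_iemStep : Measurable iemStep := by unfold iemStep; fun_prop

theorem measurePreserving_iemStep (hr : 0 ≤ r) :
    MeasurePreserving iemStep
      (((gammaMeasure 2 r).prod (gammaMeasure 2 r)).prod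
        ((volume.restrict (Ioc 0 1)).prod (volume.restrict (Ioc 0 1))))
      ((gammaMeasure 2 r).prod (gammaMeasure 2 r)) := by
  have hsplit := (measurePreserving_fracSplit hr).prod (measurePreserving_fracSplit hr)
  have hswap := (MeasurePreserving.id ((expMeasure r).prod (expMeasure r))).prod
    (Measure.measurePreserving_swap (μ := expMeasure r) (ν := expMeasure r))
  have hadd := (measurePreserving_add_expMeasure hr).prod (measurePreserving_add_expMeasure hr)
  -- ((x, y), (u, v)) ↦ ((x, u), (y, v)) ↦ ((A, B), (C, D)) ↦ ((A, B), (D, C)) ↦ ((A, D), (B, C))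
  -- ↦ (A + D, B + C), where A = x (1 - u), B = x u, C = y (1 - v), D = y v.
  convert hadd.comp ((measurePreserving_prodProdProdComm _ _ _ _).comp
    (hswap.comp (hsplit.comp (measurePreserving_prodProdProdComm _ _ _ _)))) using 1
  funext z
  simp only [iemStep, fracSplit, Function.comp_apply, Prod.map_apply, id, Prod.swap_prod_mk]
  ext <;> ring

lemma gammaShape2_eq_gammaMeasure (θ : ℝ) : gammaShape2 θ = gammaMeasure 2 θ⁻¹ := by
  rw [gammaShape2, gammaMeasure_two_eq_withDensity]
  refine withDensity_congr_ae ((ae_restrict_iff' measurableSet_Ici).mpr (ae_of_all _ ?_))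
  intro x (hx : 0 ≤ x)
  beta_reduce
  rw [← ENNReal.ofReal_mul hx]
  ring_nf

/-- For every θ > 0, the product of two Gamma(2,θ) distributions is invariant
for the Immediate Exchange Model: for every bounded measurable f,
∫∫ (∫₀¹∫₀¹ f(x(1−u)+yv, y(1−v)+xu) du dv) ν_θ(dx) ν_θ(dy) = ∫∫ f dν_θ dν_θ. -/
theorem gamma2_product_invariant
    (θ : ℝ) (hθ : 0 < θ) (f : ℝ × ℝ → ℝ)
    (hf : Measurable f) (C : ℝ) (hbound : ∀ p, |f p| ≤ C) :
    (∫ p : ℝ × ℝ, (∫ u in (0:ℝ)..1, ∫ v in (0:ℝ)..1,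
        f (p.1 * (1 - u) + p.2 * v, p.2 * (1 - v) + p.1 * u))
      ∂((gammaShape2 θ).prod (gammaShape2 θ)))
    = ∫ p : ℝ × ℝ, f p ∂((gammaShape2 θ).prod (gammaShape2 θ)) := by
  rw [gammaShape2_eq_gammaMeasure]
  have := isProbabilityMeasure_gammaMeasure two_pos (inv_pos.mpr hθ)
  have : IsProbabilityMeasure (volume.restrict (Ioc (0 : ℝ) 1)) := ⟨by simp⟩
  have integrable_comp : ∀ {α : Type} [MeasurableSpace α] (m : Measure α) [IsFiniteMeasure m]
      (g : α → ℝ × ℝ), Measurable g → Integrable (fun a ↦ f (g a)) m := fun m _ g hg ↦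
    Integrable.of_bound (hf.comp hg).aestronglyMeasurable C (ae_of_all _ fun a ↦ hbound (g a))
  calc _ = ∫ p, ∫ q, f (iemStep (p, q)) ∂(volume.restrict (Ioc 0 1)).prod
          (volume.restrict (Ioc 0 1)) ∂(gammaMeasure 2 θ⁻¹).prod (gammaMeasure 2 θ⁻¹) := by
        refine integral_congr_ae (ae_of_all _ fun p ↦ ?_)
        simp only [intervalIntegral.integral_of_le zero_le_one]
        exact (integral_prod _ (integrable_comp _ (fun q ↦ iemStep (p, q)) (by fun_prop))).symm
    _ = ∫ z, f (iemStep z) ∂((gammaMeasure 2 θ⁻¹).prod (gammaMeasure 2 θ⁻¹)).prod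
          ((volume.restrict (Ioc 0 1)).prod (volume.restrict (Ioc 0 1))) :=
        (integral_prod _ (integrable_comp _ _ (by fun_prop))).symm
    _ = _ := by
        rw [← integral_map measurable_iemStep.aemeasurable hf.aestronglyMeasurable,
          (measurePreserving_iemStep (inv_nonneg.mpr hθ.le)).map_eq]
end

section
/- For all real s,t > 0, all x,y ≥ 0 and all n,m ∈ ℕ: ∫₀¹∫₀¹ D_{s,t}(n,m; x(1−u)+yv, y(1−v)+xu) φ_{s,t}(u,v) du dv = Σ_{k=0}^{n} Σ_{l=0}^{m} r_{s,t}(n,m;k,l) D_{s,t}(n−k+l, m−l+k; x,y). Consequently the generalized Immediate Exchange Model with generator L_{s,t} and the discrete dual process with rates r_{s,t} are dual at the level of generators with duality function D_{s,t}. -/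
/-!
Expanding `(x(1-u)+yv)^n (y(1-v)+xu)^m` binomially turns the integrand into a finite sum, over
the numbers `k, l` of particles exchanged, of products of a function of `u` and a function of `v`,
so the double integral is a sum of products of Beta moments
`∫ u^p (1-u)^q Beta(s,t)(du) = B(s+p, t+q) / B(s,t)`. The beta-binomial weight is itself such a
moment, `w(n,k) = C(n,k) B(s+k, t+n-k) / B(s,t)`. Writing every Beta ratio
as `Γ(s+p)/Γ(s) · Γ(t+q)/Γ(t) · Γ(s+t)/Γ(s+t+p+q)`, the normalisations `Γ(s+t)/Γ(s+t+n)` of the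
duality polynomials are exchanged between the two sides and the identity holds term by term.
-/

open MeasureTheory Finset Real

/-- The Beta function `B(s,t) = Γ(s)Γ(t)/Γ(s+t)`. -/
noncomputable def betaFn (s t : ℝ) : ℝ := Real.Gamma s * Real.Gamma t / Real.Gamma (s + t)

/-- Joint density of two independent Beta(s,t) random variables. -/
noncomputable def phiBeta (s t u v : ℝ) : ℝ :=
  (1 / betaFn s t) ^ 2 * u ^ (s - 1) * (1 - u) ^ (t - 1) * v ^ (s - 1) * (1 - v) ^ (t - 1)

/-- Duality polynomial `d_{s,t}(k,x) = x^k Γ(s+t)/Γ(s+t+k)`. -/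
noncomputable def dst (s t : ℝ) (k : ℕ) (x : ℝ) : ℝ :=
  x ^ k * Real.Gamma (s + t) / Real.Gamma (s + t + k)

/-- Two-variable duality polynomial `D_{s,t}(n,m;x,y) = d_{s,t}(n,x) d_{s,t}(m,y)`. -/
noncomputable def Dst (s t : ℝ) (n m : ℕ) (x y : ℝ) : ℝ := dst s t n x * dst s t m y

/-- Beta-binomial(n,s,t) probability mass function. -/
noncomputable def wBB (s t : ℝ) (n k : ℕ) : ℝ :=
  Real.Gamma ((n : ℝ) + 1) * Real.Gamma ((k : ℝ) + s) * Real.Gamma (((n - k : ℕ) : ℝ) + t) *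
      Real.Gamma (s + t) /
    (Real.Gamma s * Real.Gamma t * Real.Gamma (s + t + n) * Real.Gamma ((k : ℝ) + 1) *
      Real.Gamma (((n - k : ℕ) : ℝ) + 1))

/-- Redistribution rates of the discrete dual process. -/
noncomputable def rRate (s t : ℝ) (n m k l : ℕ) : ℝ := wBB s t n k * wBB s t m l

noncomputable def betaDensity (s t u : ℝ) : ℝ := u ^ (s - 1) * (1 - u) ^ (t - 1) / betaFn s t

lemma phiBeta_eq_betaDensity_mul (s t u v : ℝ) :
    phiBeta s t u v = betaDensity s t u * betaDensity s t v := by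
  simp only [phiBeta, betaDensity]
  ring

section BetaIntegral

variable {a b : ℝ}

lemma ofReal_rpow_mul_one_sub_rpow {u : ℝ} (hu : u ∈ Set.Icc (0 : ℝ) 1) :
    ((u ^ (a - 1) * (1 - u) ^ (b - 1) : ℝ) : ℂ)
      = (u : ℂ) ^ ((a : ℂ) - 1) * (1 - (u : ℂ)) ^ ((b : ℂ) - 1) := by
  push_cast
  rw [Complex.ofReal_cpow hu.1, Complex.ofReal_cpow (sub_nonneg.2 hu.2)]
  push_cast
  ring

lemma intervalIntegrable_rpow_mul_one_sub_rpow (ha : 0 < a) (hb : 0 < b) :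
    IntervalIntegrable (fun u : ℝ => u ^ (a - 1) * (1 - u) ^ (b - 1)) volume 0 1 := by
  have h := Complex.betaIntegral_convergent (u := a) (v := b) (by simpa) (by simpa)
  rw [intervalIntegrable_iff_integrableOn_Ioc_of_le zero_le_one] at h ⊢
  have h' := h.congr_fun (fun u hu =>
    (ofReal_rpow_mul_one_sub_rpow (a := a) (b := b) (Set.Ioc_subset_Icc_self hu)).symm)
    measurableSet_Ioc
  simpa [IntegrableOn] using h'.re

lemma integral_rpow_mul_one_sub_rpow (ha : 0 < a) (hb : 0 < b) :
    ∫ u in (0 : ℝ)..1, u ^ (a - 1) * (1 - u) ^ (b - 1) = betaFn a b := by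
  have hβ : Complex.betaIntegral a b
      = ((∫ u in (0 : ℝ)..1, u ^ (a - 1) * (1 - u) ^ (b - 1) : ℝ) : ℂ) := by
    rw [Complex.betaIntegral, ← intervalIntegral.integral_ofReal]
    refine intervalIntegral.integral_congr fun u hu => ?_
    rw [Set.uIcc_of_le zero_le_one] at hu
    exact (ofReal_rpow_mul_one_sub_rpow hu).symm
  calc _ = (Complex.betaIntegral a b).re := by rw [hβ, Complex.ofReal_re]
    -- `betaFn` is `ProbabilityTheory.beta` by definition.
    _ = betaFn a b := (ProbabilityTheory.beta_eq_betaIntegralReal a b ha hb).symm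

end BetaIntegral

section BetaMoments

variable {s t : ℝ}

lemma intervalIntegrable_pow_mul_one_sub_pow_mul_betaDensity (hs : 0 < s) (ht : 0 < t)
    (p q : ℕ) :
    IntervalIntegrable (fun u => u ^ p * (1 - u) ^ q * betaDensity s t u) volume 0 1 :=
  ((intervalIntegrable_rpow_mul_one_sub_rpow hs ht).div_const _).continuousOn_mul
    (by fun_prop)

lemma integral_pow_mul_one_sub_pow_mul_betaDensity (hs : 0 < s) (ht : 0 < t) (p q : ℕ) :
    ∫ u in (0 : ℝ)..1, u ^ p * (1 - u) ^ q * betaDensity s t u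
      = betaFn (s + p) (t + q) / betaFn s t := by
  simp only [betaDensity, mul_div_assoc', intervalIntegral.integral_div]
  rw [← integral_rpow_mul_one_sub_rpow (by positivity : 0 < s + p) (by positivity : 0 < t + q)]
  congr 1
  refine intervalIntegral.integral_congr_Ioo_of_le zero_le_one fun u hu => ?_
  rw [show s + p - 1 = s - 1 + p by ring, show t + q - 1 = t - 1 + q by ring,
    Real.rpow_add_natCast hu.1.ne', Real.rpow_add_natCast (sub_pos.2 hu.2).ne']
  ring

lemma betaFn_add_natCast_div_betaFn (hs : 0 < s) (ht : 0 < t) (p q : ℕ) :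
    betaFn (s + p) (t + q) / betaFn s t
      = Real.Gamma (s + p) / Real.Gamma s * (Real.Gamma (t + q) / Real.Gamma t)
        * (Real.Gamma (s + t) / Real.Gamma (s + t + (p + q : ℕ))) := by
  have hΓ : ∀ a : ℝ, 0 < a → Real.Gamma a ≠ 0 := fun a ha => (Real.Gamma_pos_of_pos ha).ne'
  have hsum : s + p + (t + q) = s + t + (p + q : ℕ) := by push_cast; ring
  have hst := hΓ _ (by positivity : 0 < s + t + (p + q : ℕ))
  simp only [betaFn, hsum]
  field_simp [hΓ s hs, hΓ t ht, hΓ (s + t) (by positivity), hst]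

lemma wBB_eq_choose_mul_betaFn_div (hs : 0 < s) (ht : 0 < t) {n k : ℕ} (hk : k ≤ n) :
    wBB s t n k = n.choose k * (betaFn (s + k) (t + (n - k : ℕ)) / betaFn s t) := by
  rw [betaFn_add_natCast_div_betaFn hs ht, Nat.add_sub_cancel' hk, Nat.cast_choose ℝ hk]
  simp only [wBB, Real.Gamma_nat_eq_factorial, add_comm (k : ℝ) s,
    add_comm ((n - k : ℕ) : ℝ) t]
  ring

end BetaMoments

lemma intervalIntegral_integral_finsetSum_mul {ι : Type*} (S : Finset ι) {a b c d : ℝ}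
    {μ ν : Measure ℝ} {f g : ι → ℝ → ℝ} (hf : ∀ i ∈ S, IntervalIntegrable (f i) μ a b)
    (hg : ∀ i ∈ S, IntervalIntegrable (g i) ν c d) :
    ∫ u in a..b, (∫ v in c..d, ∑ i ∈ S, f i u * g i v ∂ν) ∂μ
      = ∑ i ∈ S, (∫ u in a..b, f i u ∂μ) * ∫ v in c..d, g i v ∂ν := by
  have hinner : ∀ u, ∫ v in c..d, ∑ i ∈ S, f i u * g i v ∂ν
      = ∑ i ∈ S, f i u * ∫ v in c..d, g i v ∂ν := fun u => by
    rw [intervalIntegral.integral_finsetSum fun i hi => (hg i hi).const_mul _]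
    simp only [intervalIntegral.integral_const_mul]
  simp only [hinner]
  rw [intervalIntegral.integral_finsetSum fun i hi => (hf i hi).mul_const _]
  simp only [intervalIntegral.integral_mul_const]

lemma exchange_pow_mul_pow_eq_sum {R : Type*} [CommRing R] (x y u v : R) (n m : ℕ) :
    (x * (1 - u) + y * v) ^ n * (y * (1 - v) + x * u) ^ m
      = ∑ kl ∈ range (n + 1) ×ˢ range (m + 1),
          n.choose kl.1 * m.choose kl.2 * x ^ (n - kl.1 + kl.2) * y ^ (m - kl.2 + kl.1)
            * (u ^ kl.2 * (1 - u) ^ (n - kl.1)) * (v ^ kl.1 * (1 - v) ^ (m - kl.2)) := by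
  rw [add_comm (x * (1 - u)), add_pow, add_comm (y * (1 - v)), add_pow, sum_mul_sum,
    sum_product]
  refine sum_congr rfl fun k _ => sum_congr rfl fun l _ => ?_
  simp only [mul_pow, pow_add]
  ring

lemma Dst_exchange_mul_phiBeta_eq_sum (s t x y u v : ℝ) (n m : ℕ) :
    Dst s t n m (x * (1 - u) + y * v) (y * (1 - v) + x * u) * phiBeta s t u v
      = ∑ kl ∈ range (n + 1) ×ˢ range (m + 1),
          (n.choose kl.1 * m.choose kl.2 * x ^ (n - kl.1 + kl.2) * y ^ (m - kl.2 + kl.1)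
            * (Real.Gamma (s + t) / Real.Gamma (s + t + n))
            * (Real.Gamma (s + t) / Real.Gamma (s + t + m))
            * (u ^ kl.2 * (1 - u) ^ (n - kl.1) * betaDensity s t u))
          * (v ^ kl.1 * (1 - v) ^ (m - kl.2) * betaDensity s t v) := by
  calc _ = (x * (1 - u) + y * v) ^ n * (y * (1 - v) + x * u) ^ m
        * (Real.Gamma (s + t) / Real.Gamma (s + t + n)
          * (Real.Gamma (s + t) / Real.Gamma (s + t + m))
          * (betaDensity s t u * betaDensity s t v)) := by
        rw [Dst, dst, dst, phiBeta_eq_betaDensity_mul]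
        ring
    _ = _ := by
        rw [exchange_pow_mul_pow_eq_sum, sum_mul]
        refine sum_congr rfl fun kl _ => ?_
        ring

theorem generalized_duality_transition_operator_general
    (s t : ℝ) (hs : 0 < s) (ht : 0 < t)
    (x y : ℝ) (n m : ℕ) :
    (∫ u in (0:ℝ)..1, ∫ v in (0:ℝ)..1,
        Dst s t n m (x * (1 - u) + y * v) (y * (1 - v) + x * u) * phiBeta s t u v)
      = ∑ k ∈ Finset.range (n + 1), ∑ l ∈ Finset.range (m + 1),
          rRate s t n m k l * Dst s t (n - k + l) (m - l + k) x y := by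
  simp only [Dst_exchange_mul_phiBeta_eq_sum]
  rw [intervalIntegral_integral_finsetSum_mul _
    (fun _ _ => (intervalIntegrable_pow_mul_one_sub_pow_mul_betaDensity hs ht _ _).const_mul _)
    (fun _ _ => intervalIntegrable_pow_mul_one_sub_pow_mul_betaDensity hs ht _ _), sum_product]
  refine sum_congr rfl fun k hk => sum_congr rfl fun l hl => ?_
  rw [mem_range_succ_iff] at hk hl
  rw [intervalIntegral.integral_const_mul, integral_pow_mul_one_sub_pow_mul_betaDensity hs ht,
    integral_pow_mul_one_sub_pow_mul_betaDensity hs ht, rRate,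
    wBB_eq_choose_mul_betaFn_div hs ht hk, wBB_eq_choose_mul_betaFn_div hs ht hl]
  simp only [betaFn_add_natCast_div_betaFn hs ht, Dst, dst]
  rw [Nat.add_sub_cancel' hk, Nat.add_sub_cancel' hl, Nat.add_comm l, Nat.add_comm k]
  ring

/-- Duality at the level of transition operators for the generalized
Immediate Exchange Model:
∫₀¹∫₀¹ D_{s,t}(n,m; x(1−u)+yv, y(1−v)+xu) φ_{s,t}(u,v) du dv
  = Σ_{k=0}^{n} Σ_{l=0}^{m} r_{s,t}(n,m;k,l) D_{s,t}(n−k+l, m−l+k; x,y). -/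
theorem generalized_duality_transition_operator
    (s t : ℝ) (hs : 0 < s) (ht : 0 < t)
    (x y : ℝ) (hx : 0 ≤ x) (hy : 0 ≤ y) (n m : ℕ) :
    (∫ u in (0:ℝ)..1, ∫ v in (0:ℝ)..1,
        Dst s t n m (x * (1 - u) + y * v) (y * (1 - v) + x * u) * phiBeta s t u v)
      = ∑ k ∈ Finset.range (n + 1), ∑ l ∈ Finset.range (m + 1),
          rRate s t n m k l * Dst s t (n - k + l) (m - l + k) x y :=
  generalized_duality_transition_operator_general s t hs ht x y n m
end

section
/- For all real s,t > 0, θ ∈ (0,1), n,m ∈ ℕ, 0 ≤ k ≤ n and 0 ≤ l ≤ m, the discrete redistribution rates satisfy detailed balance with respect to the discrete Gamma distribution: r_{s,t}(n,m;k,l) ν_θ^{s+t}(n) ν_θ^{s+t}(m) = r_{s,t}(n−k+l, m−l+k; l, k) ν_θ^{s+t}(n−k+l) ν_θ^{s+t}(m−l+k), where ν_θ^{s+t}(n) = (1−θ)^{s+t} θ^n Γ(s+t+n)/(Γ(s+t) n!). Consequently, the product measures with marginals ν_θ^{s+t} are reversible for the discrete dual process. -/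
open Real

/-- Discrete Gamma distribution with shape `s+t` and parameter `θ ∈ (0,1)`:
`ν_θ^{s+t}(n) = (1−θ)^{s+t} θⁿ Γ(s+t+n)/(Γ(s+t) n!)`. -/
noncomputable def nuDisc (s t θ : ℝ) (n : ℕ) : ℝ :=
  (1 - θ) ^ (s + t) * θ ^ n * Real.Gamma (s + t + n) /
    (Real.Gamma (s + t) * (Nat.factorial n : ℝ))

lemma wnu (s t θ : ℝ) (hs : 0 < s) (ht : 0 < t) (n k : ℕ) :
    wBB s t n k * nuDisc s t θ n
      = (1 - θ) ^ (s + t) * θ ^ n *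
          (Real.Gamma ((k : ℝ) + s) * Real.Gamma (((n - k : ℕ) : ℝ) + t)) /
        (Real.Gamma s * Real.Gamma t * Real.Gamma ((k : ℝ) + 1) *
          Real.Gamma (((n - k : ℕ) : ℝ) + 1)) := by
  unfold wBB nuDisc
  have h1 : Real.Gamma ((n : ℝ) + 1) = (n.factorial : ℝ) := Real.Gamma_nat_eq_factorial n
  have h2 : Real.Gamma (s + t) ≠ 0 := (Real.Gamma_pos_of_pos (by linarith)).ne'
  have h3 : Real.Gamma (s + t + n) ≠ 0 :=
    (Real.Gamma_pos_of_pos (by positivity)).ne'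
  have h4 : (n.factorial : ℝ) ≠ 0 := by exact_mod_cast n.factorial_ne_zero
  have h5 : Real.Gamma s ≠ 0 := (Real.Gamma_pos_of_pos hs).ne'
  have h6 : Real.Gamma t ≠ 0 := (Real.Gamma_pos_of_pos ht).ne'
  have h7 : Real.Gamma ((k : ℝ) + 1) ≠ 0 := by
    have := Real.Gamma_pos_of_pos (show (0:ℝ) < (k : ℝ) + 1 by positivity); linarith
  have h8 : Real.Gamma (((n - k : ℕ) : ℝ) + 1) ≠ 0 := by
    have := Real.Gamma_pos_of_pos (show (0:ℝ) < ((n - k : ℕ) : ℝ) + 1 by positivity); linarith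
  rw [h1]
  field_simp

/-- Detailed balance of the discrete redistribution rates with respect to the
discrete Gamma distribution:
`r(n,m;k,l) ν(n) ν(m) = r(n−k+l, m−l+k; l, k) ν(n−k+l) ν(m−l+k)` for `k ≤ n`, `l ≤ m`. -/
theorem discrete_dual_detailed_balance
    (s t θ : ℝ) (hs : 0 < s) (ht : 0 < t) (hθ : θ ∈ Set.Ioo (0:ℝ) 1)
    (n m k l : ℕ) (hk : k ≤ n) (hl : l ≤ m) :
    rRate s t n m k l * nuDisc s t θ n * nuDisc s t θ m
      = rRate s t (n - k + l) (m - l + k) l k *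
          nuDisc s t θ (n - k + l) * nuDisc s t θ (m - l + k) := by
  have hL : rRate s t n m k l * nuDisc s t θ n * nuDisc s t θ m
      = (wBB s t n k * nuDisc s t θ n) * (wBB s t m l * nuDisc s t θ m) := by
    rw [rRate]; ring
  have hR : rRate s t (n - k + l) (m - l + k) l k *
        nuDisc s t θ (n - k + l) * nuDisc s t θ (m - l + k)
      = (wBB s t (n - k + l) l * nuDisc s t θ (n - k + l)) *
          (wBB s t (m - l + k) k * nuDisc s t θ (m - l + k)) := by
    rw [rRate]; ring
  rw [hL, hR, wnu s t θ hs ht n k, wnu s t θ hs ht m l,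
    wnu s t θ hs ht (n - k + l) l, wnu s t θ hs ht (m - l + k) k]
  simp only [Nat.add_sub_cancel]
  have hpow : θ ^ n * θ ^ m = θ ^ (n - k + l) * θ ^ (m - l + k) := by
    rw [← pow_add, ← pow_add]; congr 1; omega
  linear_combination ((1 - θ) ^ (s + t) * (1 - θ) ^ (s + t) *
      Real.Gamma ((k : ℝ) + s) * Real.Gamma (((n - k : ℕ) : ℝ) + t) *
      Real.Gamma ((l : ℝ) + s) * Real.Gamma (((m - l : ℕ) : ℝ) + t) /
      ((Real.Gamma s * Real.Gamma t * Real.Gamma ((k : ℝ) + 1) *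
          Real.Gamma (((n - k : ℕ) : ℝ) + 1)) *
        (Real.Gamma s * Real.Gamma t * Real.Gamma ((l : ℝ) + 1) *
          Real.Gamma (((m - l : ℕ) : ℝ) + 1)))) * hpow
end

section
/- Law of large numbers for the Beta-binomial distribution: let s,t > 0, x ≥ 0, and let (n_K)_{K∈ℕ} be natural numbers with n_K/K → x as K → ∞. Then for every bounded continuous g : [0,∞) → ℝ, lim_{K→∞} Σ_{k=0}^{n_K} w_{s,t}(n_K,k) g(k/K) = (1/B(s,t)) ∫₀¹ g(xu) u^{s−1}(1−u)^{t−1} du. In other words, if X^{(n_K)} is Beta-binomial with parameters (n_K, s, t), then X^{(n_K)}/K converges in distribution to x·Y with Y Beta(s,t)-distributed. -/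
open MeasureTheory Finset Filter Real

lemma complex_eq (a b : ℝ) (u : ℝ) (hu : u ∈ Set.Ioc (0:ℝ) 1) :
    (u:ℂ) ^ ((a:ℂ)-1) * (1-(u:ℂ)) ^ ((b:ℂ)-1)
      = ((u ^ (a-1) * (1-u) ^ (b-1) : ℝ) : ℂ) := by
  have h1 : (0:ℝ) ≤ u := le_of_lt hu.1
  have h2 : (0:ℝ) ≤ 1 - u := by linarith [hu.2]
  rw [show ((a:ℂ)-1) = ((a-1 : ℝ):ℂ) by push_cast; ring,
      show (1-(u:ℂ)) = ((1-u : ℝ):ℂ) by push_cast; ring,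
      show ((b:ℂ)-1) = ((b-1 : ℝ):ℂ) by push_cast; ring,
      ← Complex.ofReal_cpow h1, ← Complex.ofReal_cpow h2]
  push_cast
  ring

lemma betaIntegrable {a b : ℝ} (ha : 0 < a) (hb : 0 < b) :
    IntervalIntegrable (fun u : ℝ => u ^ (a-1) * (1-u) ^ (b-1)) volume 0 1 := by
  have hc : IntervalIntegrable (fun u : ℝ => (u:ℂ) ^ ((a:ℂ)-1) * (1-(u:ℂ)) ^ ((b:ℂ)-1))
      volume 0 1 := Complex.betaIntegral_convergent (by simpa using ha) (by simpa using hb)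
  rw [intervalIntegrable_iff_integrableOn_Ioc_of_le (by norm_num)] at hc ⊢
  have := hc.re
  apply this.congr
  rw [Filter.EventuallyEq, ae_restrict_iff' measurableSet_Ioc]
  refine Filter.Eventually.of_forall (fun u hu => ?_)
  rw [complex_eq a b u hu]
  simp

lemma betaIntegral_real {a b : ℝ} (ha : 0 < a) (hb : 0 < b) :
    ∫ u in (0:ℝ)..1, u ^ (a-1) * (1-u) ^ (b-1) = betaFn a b := by
  have h := Complex.Gamma_mul_Gamma_eq_betaIntegral (s := a) (t := b)
    (by simpa using ha) (by simpa using hb)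
  have hint : Complex.betaIntegral a b
      = ((∫ u in (0:ℝ)..1, u ^ (a-1) * (1-u) ^ (b-1) : ℝ) : ℂ) := by
    rw [Complex.betaIntegral, ← intervalIntegral.integral_ofReal]
    rw [intervalIntegral.integral_of_le (by norm_num : (0:ℝ) ≤ 1),
        intervalIntegral.integral_of_le (by norm_num : (0:ℝ) ≤ 1)]
    apply setIntegral_congr_fun measurableSet_Ioc
    intro u hu
    exact complex_eq a b u hu
  rw [hint] at h
  have hG : Complex.Gamma ((a:ℂ)+(b:ℂ)) = ((Real.Gamma (a+b) : ℝ) : ℂ) := by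
    rw [← Complex.ofReal_add, Complex.Gamma_ofReal]
  rw [Complex.Gamma_ofReal, Complex.Gamma_ofReal, hG] at h
  have h2 : ((Real.Gamma a * Real.Gamma b : ℝ) : ℂ)
      = ((Real.Gamma (a+b) * ∫ u in (0:ℝ)..1, u ^ (a-1) * (1-u) ^ (b-1) : ℝ) : ℂ) := by
    push_cast; exact h
  have h3 := Complex.ofReal_inj.mp h2
  have hGab : Real.Gamma (a+b) ≠ 0 := (Real.Gamma_pos_of_pos (by linarith)).ne'
  rw [betaFn]
  field_simp
  linarith [h3]

lemma bern_sum (n : ℕ) (u : ℝ) :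
    ∑ k ∈ Finset.range (n+1), (n.choose k : ℝ) * u^k * (1-u)^(n-k) = 1 := by
  have := congrArg (Polynomial.eval u) (bernsteinPolynomial.sum ℝ n)
  simpa [bernsteinPolynomial, Polynomial.eval_finset_sum] using this

lemma bern_var (n : ℕ) (u : ℝ) :
    ∑ k ∈ Finset.range (n+1), (n.choose k : ℝ) * u^k * (1-u)^(n-k) * ((k:ℝ) - n*u)^2
      = n * u * (1-u) := by
  have := congrArg (Polynomial.eval u) (bernsteinPolynomial.variance ℝ n)
  simp [bernsteinPolynomial, Polynomial.eval_finset_sum] at this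
  rw [← this]
  exact Finset.sum_congr rfl fun k hk => by ring

lemma binomial_lln (x : ℝ) (nK : ℕ → ℕ)
    (hn : Tendsto (fun K : ℕ => (nK K : ℝ) / K) atTop (nhds x))
    (g : ℝ → ℝ) (hg : Continuous g) (C : ℝ) (hbound : ∀ z, |g z| ≤ C)
    (u : ℝ) (hu0 : 0 ≤ u) (hu1 : u ≤ 1) :
    Tendsto (fun K : ℕ => ∑ k ∈ Finset.range (nK K + 1),
        ((nK K).choose k : ℝ) * u ^ k * (1 - u) ^ (nK K - k) * g ((k : ℝ) / K))
      atTop (nhds (g (x * u))) := by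
  have hC : 0 ≤ C := le_trans (abs_nonneg _) (hbound 0)
  rw [Metric.tendsto_nhds]
  intro ε hε
  obtain ⟨δ, hδ, hgδ⟩ := Metric.continuousAt_iff.mp (hg.continuousAt (x := x*u)) (ε/2)
    (by linarith)
  set c : ℝ := 8*C/δ^2 with hc
  have hc0 : 0 ≤ c := by positivity
  have h1 : ∀ᶠ K : ℕ in atTop, |(nK K : ℝ)/K - x| < δ/2 := by
    have := Metric.tendsto_nhds.mp hn (δ/2) (by linarith)
    simpa [Real.dist_eq] using this
  have hnn : Tendsto (fun K : ℕ => c * ((nK K : ℝ)/K * (1/K))) atTop (nhds 0) := by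
    have h2 : Tendsto (fun K : ℕ => (nK K:ℝ)/K * (1/K)) atTop (nhds (x * 0)) :=
      hn.mul tendsto_one_div_atTop_nhds_zero_nat
    simpa using h2.const_mul c
  have h3 : ∀ᶠ K : ℕ in atTop, c * ((nK K : ℝ)/K * (1/K)) < ε/2 := by
    have := Metric.tendsto_nhds.mp hnn (ε/2) (by linarith)
    filter_upwards [this] with K hK
    rw [Real.dist_eq, sub_zero] at hK
    exact lt_of_le_of_lt (le_abs_self _) hK
  filter_upwards [h1, h3, eventually_ge_atTop 1] with K hK1 hK3 hKpos
  set n : ℕ := nK K with hndef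
  have hKR : (1:ℝ) ≤ (K:ℝ) := by exact_mod_cast hKpos
  have hKpos' : (0:ℝ) < K := by linarith
  set p : ℕ → ℝ := fun k => (n.choose k : ℝ) * u^k * (1-u)^(n-k) with hp
  have hp0 : ∀ k, 0 ≤ p k := fun k => by
    have : (0:ℝ) ≤ 1 - u := by linarith
    positivity
  -- pointwise bound
  have key : ∀ k ∈ Finset.range (n+1),
      |g ((k:ℝ)/K) - g (x*u)| ≤ ε/2 + c * ((k:ℝ) - n*u)^2 / K^2 := by
    intro k _
    have hnonneg : 0 ≤ c * ((k:ℝ) - n*u)^2 / K^2 := by positivity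
    by_cases hd : |(k:ℝ)/K - x*u| < δ
    · have := hgδ (show dist ((k:ℝ)/K) (x*u) < δ by simpa [Real.dist_eq] using hd)
      rw [Real.dist_eq] at this
      linarith
    · push_neg at hd
      have hub : |(n:ℝ)*u/K - x*u| < δ/2 := by
        have : (n:ℝ)*u/K - x*u = ((n:ℝ)/K - x) * u := by ring
        rw [this, abs_mul, abs_of_nonneg hu0]
        calc |(n:ℝ)/K - x| * u ≤ |(n:ℝ)/K - x| * 1 := by
              exact mul_le_mul_of_nonneg_left hu1 (abs_nonneg _)
          _ < δ/2 := by rw [mul_one]; exact hK1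
      have hlow : δ/2 ≤ |(k:ℝ)/K - (n:ℝ)*u/K| := by
        have := abs_sub_abs_le_abs_sub ((k:ℝ)/K - x*u) ((k:ℝ)/K - ((n:ℝ)*u/K))
        have htri : |(k:ℝ)/K - x*u| ≤ |(k:ℝ)/K - (n:ℝ)*u/K| + |(n:ℝ)*u/K - x*u| :=
          abs_sub_le _ _ _
        linarith
      have hKabs : |(k:ℝ)/K - (n:ℝ)*u/K| = |(k:ℝ) - n*u| / K := by
        rw [show (k:ℝ)/K - (n:ℝ)*u/K = ((k:ℝ) - (n:ℝ)*u)/K by ring, abs_div,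
          abs_of_pos hKpos']
      have hlow2 : δ/2 * K ≤ |(k:ℝ) - n*u| := by
        rw [hKabs] at hlow
        rw [le_div_iff₀ hKpos'] at hlow
        linarith
      have hsq : (δ/2 * K)^2 ≤ ((k:ℝ) - n*u)^2 := by
        rw [← sq_abs ((k:ℝ) - n*u)]
        exact pow_le_pow_left₀ (by positivity) hlow2 2
      have h2C : 2*C ≤ c * ((k:ℝ) - n*u)^2 / K^2 := by
        rw [hc, div_mul_eq_mul_div, div_div, le_div_iff₀ (by positivity)]
        nlinarith [mul_le_mul_of_nonneg_left hsq (show (0:ℝ) ≤ 8*C by linarith)]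
      have := abs_sub (g ((k:ℝ)/K)) (g (x*u))
      have hb1 := hbound ((k:ℝ)/K); have hb2 := hbound (x*u)
      have : |g ((k:ℝ)/K) - g (x*u)| ≤ 2*C := by
        calc |g ((k:ℝ)/K) - g (x*u)| ≤ |g ((k:ℝ)/K)| + |g (x*u)| := abs_sub _ _
          _ ≤ 2*C := by linarith
      linarith
  -- assemble
  have hsum1 : ∑ k ∈ Finset.range (n+1), p k = 1 := bern_sum n u
  have hvar : ∑ k ∈ Finset.range (n+1), p k * ((k:ℝ) - n*u)^2 = n*u*(1-u) := by
    simpa [hp] using bern_var n u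
  have step1 : dist (∑ k ∈ Finset.range (n+1), p k * g ((k:ℝ)/K)) (g (x*u))
      ≤ ∑ k ∈ Finset.range (n+1), p k * |g ((k:ℝ)/K) - g (x*u)| := by
    rw [Real.dist_eq]
    have e1 : ∑ k ∈ Finset.range (n+1), p k * (g ((k:ℝ)/K) - g (x*u))
        = (∑ k ∈ Finset.range (n+1), p k * g ((k:ℝ)/K))
          - (∑ k ∈ Finset.range (n+1), p k) * g (x*u) := by
      rw [Finset.sum_mul, ← Finset.sum_sub_distrib]
      exact Finset.sum_congr rfl fun k _ => by ring
    rw [hsum1, one_mul] at e1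
    rw [← e1]
    calc |∑ k ∈ Finset.range (n+1), p k * (g ((k:ℝ)/K) - g (x*u))|
        ≤ ∑ k ∈ Finset.range (n+1), |p k * (g ((k:ℝ)/K) - g (x*u))| :=
          Finset.abs_sum_le_sum_abs _ _
      _ = ∑ k ∈ Finset.range (n+1), p k * |g ((k:ℝ)/K) - g (x*u)| := by
          exact Finset.sum_congr rfl fun k _ => by
            rw [abs_mul, abs_of_nonneg (hp0 k)]
  have step2 : ∑ k ∈ Finset.range (n+1), p k * |g ((k:ℝ)/K) - g (x*u)|
      ≤ ε/2 + c * ((n:ℝ)*u*(1-u)) / K^2 := by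
    calc ∑ k ∈ Finset.range (n+1), p k * |g ((k:ℝ)/K) - g (x*u)|
        ≤ ∑ k ∈ Finset.range (n+1), p k * (ε/2 + c * ((k:ℝ) - n*u)^2 / K^2) :=
          Finset.sum_le_sum fun k hk =>
            mul_le_mul_of_nonneg_left (key k hk) (hp0 k)
      _ = (∑ k ∈ Finset.range (n+1), p k) * (ε/2)
          + (c / K^2) * ∑ k ∈ Finset.range (n+1), p k * ((k:ℝ) - n*u)^2 := by
          rw [Finset.sum_mul, Finset.mul_sum, ← Finset.sum_add_distrib]
          exact Finset.sum_congr rfl fun k _ => by ring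
      _ = ε/2 + c * ((n:ℝ)*u*(1-u)) / K^2 := by rw [hsum1, hvar]; ring
  have step3 : c * ((n:ℝ)*u*(1-u)) / K^2 ≤ c * ((n:ℝ)/K * (1/K)) := by
    have h1 : c * ((n:ℝ)*u*(1-u)) / K^2 = (c * (n:ℝ) / K^2) * (u*(1-u)) := by ring
    have h2 : c * ((n:ℝ)/K * (1/K)) = (c * (n:ℝ) / K^2) * 1 := by
      rw [mul_one, show ((n:ℝ)/K * (1/K)) = (n:ℝ)/K^2 by
        rw [div_mul_div_comm, mul_one, sq]]
      ring
    rw [h1, h2]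
    apply mul_le_mul_of_nonneg_left _ (by positivity)
    nlinarith
  calc dist (∑ k ∈ Finset.range (n+1), ((n.choose k : ℝ) * u^k * (1-u)^(n-k)) * g ((k:ℝ)/K))
        (g (x*u)) ≤ ∑ k ∈ Finset.range (n+1), p k * |g ((k:ℝ)/K) - g (x*u)| := step1
    _ ≤ ε/2 + c * ((n:ℝ)*u*(1-u)) / K^2 := step2
    _ ≤ ε/2 + c * ((n:ℝ)/K * (1/K)) := by linarith
    _ < ε := by linarith

lemma wBB_eq (s t : ℝ) (hs : 0 < s) (ht : 0 < t) {n k : ℕ} (hk : k ≤ n) :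
    wBB s t n k = (1 / betaFn s t) *
      ((n.choose k : ℝ) * betaFn ((k:ℝ) + s) (((n-k:ℕ):ℝ) + t)) := by
  have hnk : ((n-k:ℕ):ℝ) = (n:ℝ) - (k:ℝ) := by
    push_cast [hk]; ring
  have hGs := Real.Gamma_pos_of_pos hs
  have hGt := Real.Gamma_pos_of_pos ht
  have hGst := Real.Gamma_pos_of_pos (show (0:ℝ) < s + t by linarith)
  have hGstn := Real.Gamma_pos_of_pos (show (0:ℝ) < s + t + n by positivity)
  have hGks := Real.Gamma_pos_of_pos (show (0:ℝ) < (k:ℝ) + s by positivity)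
  have hGnkt := Real.Gamma_pos_of_pos (show (0:ℝ) < ((n-k:ℕ):ℝ) + t by positivity)
  have hGn1 : Real.Gamma ((n:ℝ) + 1) = (Nat.factorial n : ℝ) := by
    exact_mod_cast Real.Gamma_nat_eq_factorial n
  have hGk1 : Real.Gamma ((k:ℝ) + 1) = (Nat.factorial k : ℝ) := by
    exact_mod_cast Real.Gamma_nat_eq_factorial k
  have hGnk1 : Real.Gamma (((n-k:ℕ):ℝ) + 1) = (Nat.factorial (n-k) : ℝ) := by
    exact_mod_cast Real.Gamma_nat_eq_factorial (n-k)
  have hsum : ((k:ℝ) + s) + (((n-k:ℕ):ℝ) + t) = s + t + n := by rw [hnk]; ring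
  have hchoose : (n.choose k : ℝ) = (Nat.factorial n : ℝ) / ((Nat.factorial k : ℝ) * (Nat.factorial (n-k) : ℝ)) := by
    exact_mod_cast Nat.cast_choose ℝ hk
  rw [wBB, betaFn, betaFn, hsum, hGn1, hGk1, hGnk1, hchoose]
  have hkf : ((Nat.factorial k : ℕ) : ℝ) ≠ 0 := by positivity
  have hnkf : ((Nat.factorial (n-k) : ℕ) : ℝ) ≠ 0 := by positivity
  field_simp

lemma sum_wBB_eq (s t : ℝ) (hs : 0 < s) (ht : 0 < t) (g : ℝ → ℝ) (n K : ℕ) :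
    ∑ k ∈ Finset.range (n + 1), wBB s t n k * g ((k : ℝ) / K)
    = (1 / betaFn s t) * ∫ u in (0:ℝ)..1,
        (∑ k ∈ Finset.range (n+1), (n.choose k : ℝ) * u^k * (1-u)^(n-k) * g ((k:ℝ)/K))
          * u ^ (s-1) * (1-u) ^ (t-1) := by
  have hint : ∀ k : ℕ, IntervalIntegrable
      (fun u : ℝ => u ^ ((k:ℝ) + s - 1) * (1-u) ^ (((n-k:ℕ):ℝ) + t - 1)) volume 0 1 :=
    fun k => betaIntegrable (by positivity) (by positivity)
  calc ∑ k ∈ Finset.range (n+1), wBB s t n k * g ((k:ℝ)/K)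
      = ∑ k ∈ Finset.range (n+1), (1/betaFn s t) *
          (((n.choose k : ℝ) * g ((k:ℝ)/K)) *
            ∫ u in (0:ℝ)..1, u ^ ((k:ℝ)+s-1) * (1-u) ^ (((n-k:ℕ):ℝ)+t-1)) := by
        refine Finset.sum_congr rfl fun k hk => ?_
        rw [Finset.mem_range, Nat.lt_succ_iff] at hk
        rw [wBB_eq s t hs ht hk,
          betaIntegral_real (a := (k:ℝ)+s) (b := ((n-k:ℕ):ℝ)+t) (by positivity) (by positivity)]
        ring
    _ = (1/betaFn s t) * ∑ k ∈ Finset.range (n+1),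
          ∫ u in (0:ℝ)..1, ((n.choose k : ℝ) * g ((k:ℝ)/K)) *
            (u ^ ((k:ℝ)+s-1) * (1-u) ^ (((n-k:ℕ):ℝ)+t-1)) := by
        rw [Finset.mul_sum]
        refine Finset.sum_congr rfl fun k hk => ?_
        rw [intervalIntegral.integral_const_mul]
    _ = (1/betaFn s t) * ∫ u in (0:ℝ)..1, ∑ k ∈ Finset.range (n+1),
          ((n.choose k : ℝ) * g ((k:ℝ)/K)) *
            (u ^ ((k:ℝ)+s-1) * (1-u) ^ (((n-k:ℕ):ℝ)+t-1)) := by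
        rw [intervalIntegral.integral_finset_sum]
        intro k hk
        exact (hint k).const_mul _
    _ = (1/betaFn s t) * ∫ u in (0:ℝ)..1,
          (∑ k ∈ Finset.range (n+1), (n.choose k : ℝ) * u^k * (1-u)^(n-k) * g ((k:ℝ)/K))
            * u ^ (s-1) * (1-u) ^ (t-1) := by
        congr 1
        rw [intervalIntegral.integral_of_le (by norm_num : (0:ℝ) ≤ 1),
          intervalIntegral.integral_of_le (by norm_num : (0:ℝ) ≤ 1),
          MeasureTheory.integral_Ioc_eq_integral_Ioo,
          MeasureTheory.integral_Ioc_eq_integral_Ioo]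
        refine setIntegral_congr_fun measurableSet_Ioo fun u hu => ?_
        obtain ⟨hu0, hu1⟩ := hu
        have h1u : (0:ℝ) < 1 - u := by linarith
        rw [Finset.sum_mul, Finset.sum_mul]
        refine Finset.sum_congr rfl fun k hk => ?_
        rw [show (k:ℝ) + s - 1 = (k:ℝ) + (s-1) by ring,
          show ((n-k:ℕ):ℝ) + t - 1 = ((n-k:ℕ):ℝ) + (t-1) by ring,
          Real.rpow_add hu0, Real.rpow_add h1u,
          Real.rpow_natCast, Real.rpow_natCast]
        ring

lemma measAux (s t : ℝ) (h : ℝ → ℝ) (hh : Continuous h) :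
    Measurable (fun u : ℝ => h u * u ^ (s-1) * (1-u) ^ (t-1)) := by
  have m1 : Measurable (fun u : ℝ => u ^ (s-1)) := by measurability
  have m2' : Measurable (fun v : ℝ => v ^ (t-1)) := by measurability
  have m2 : Measurable (fun u : ℝ => (1-u) ^ (t-1)) :=
    m2'.comp (measurable_const.sub measurable_id)
  exact (hh.measurable.mul m1).mul m2

/-- Law of large numbers for the Beta-binomial distribution: if n_K/K → x,
then for every bounded continuous g,
Σ_{k=0}^{n_K} w_{s,t}(n_K,k) g(k/K) → (1/B(s,t)) ∫₀¹ g(xu) u^{s−1}(1−u)^{t−1} du,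
i.e. the rescaled Beta-binomial converges in distribution to x·Beta(s,t). -/
theorem beta_binomial_law_of_large_numbers
    (s t : ℝ) (hs : 0 < s) (ht : 0 < t)
    (x : ℝ) (hx : 0 ≤ x)
    (nK : ℕ → ℕ) (hn : Tendsto (fun K : ℕ => (nK K : ℝ) / K) atTop (nhds x))
    (g : ℝ → ℝ) (hg : Continuous g) (C : ℝ) (hbound : ∀ z, |g z| ≤ C) :
    Tendsto
      (fun K : ℕ => ∑ k ∈ Finset.range (nK K + 1), wBB s t (nK K) k * g ((k : ℝ) / K))
      atTop
      (nhds ((1 / betaFn s t) *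
        ∫ u in (0:ℝ)..1, g (x * u) * u ^ (s - 1) * (1 - u) ^ (t - 1))) := by
  have hC : 0 ≤ C := le_trans (abs_nonneg _) (hbound 0)
  set F : ℕ → ℝ → ℝ := fun K u =>
    (∑ k ∈ Finset.range (nK K + 1),
      ((nK K).choose k : ℝ) * u^k * (1-u)^(nK K - k) * g ((k:ℝ)/K))
      * u ^ (s-1) * (1-u) ^ (t-1) with hF
  have habs : ∀ (K : ℕ) (u : ℝ), 0 ≤ u → u ≤ 1 →
      |∑ k ∈ Finset.range (nK K + 1),
        ((nK K).choose k : ℝ) * u^k * (1-u)^(nK K - k) * g ((k:ℝ)/K)| ≤ C := by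
    intro K u hu0 hu1
    have h1u : (0:ℝ) ≤ 1 - u := by linarith
    calc |∑ k ∈ Finset.range (nK K + 1),
          ((nK K).choose k : ℝ) * u^k * (1-u)^(nK K - k) * g ((k:ℝ)/K)|
        ≤ ∑ k ∈ Finset.range (nK K + 1),
          |((nK K).choose k : ℝ) * u^k * (1-u)^(nK K - k) * g ((k:ℝ)/K)| :=
          Finset.abs_sum_le_sum_abs _ _
      _ ≤ ∑ k ∈ Finset.range (nK K + 1),
          ((nK K).choose k : ℝ) * u^k * (1-u)^(nK K - k) * C := by
          refine Finset.sum_le_sum fun k hk => ?_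
          rw [abs_mul]
          have hp : (0:ℝ) ≤ ((nK K).choose k : ℝ) * u^k * (1-u)^(nK K - k) := by positivity
          rw [abs_of_nonneg hp]
          exact mul_le_mul_of_nonneg_left (hbound _) hp
      _ = C := by
          rw [← Finset.sum_mul, bern_sum (nK K) u, one_mul]
  have hdct : Tendsto (fun K : ℕ => ∫ u in (0:ℝ)..1, F K u) atTop
      (nhds (∫ u in (0:ℝ)..1, g (x * u) * u ^ (s - 1) * (1 - u) ^ (t - 1))) := by
    apply intervalIntegral.tendsto_integral_filter_of_dominated_convergence
      (bound := fun u => C * (u ^ (s-1) * (1-u) ^ (t-1)))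
    · refine Filter.Eventually.of_forall fun K => ?_
      refine (measAux s t _ ?_).aestronglyMeasurable
      exact continuous_finset_sum _ fun k _ =>
        ((continuous_const.mul (continuous_pow k)).mul
          ((continuous_const.sub continuous_id).pow (nK K - k))).mul continuous_const
    · refine Filter.Eventually.of_forall fun K => Filter.Eventually.of_forall fun u => ?_
      intro hu
      rw [Set.uIoc_of_le (by norm_num : (0:ℝ) ≤ 1)] at hu
      obtain ⟨hu0, hu1⟩ := hu
      have hu0' : (0:ℝ) ≤ u := le_of_lt hu0
      have h1u : (0:ℝ) ≤ 1 - u := by linarith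
      rw [hF]
      simp only [Real.norm_eq_abs]
      rw [abs_mul, abs_mul, abs_of_nonneg (Real.rpow_nonneg hu0' _),
        abs_of_nonneg (Real.rpow_nonneg h1u _)]
      have := habs K u hu0' hu1
      have hr1 : (0:ℝ) ≤ u ^ (s-1) := Real.rpow_nonneg hu0' _
      have hr2 : (0:ℝ) ≤ (1-u) ^ (t-1) := Real.rpow_nonneg h1u _
      calc |∑ k ∈ Finset.range (nK K + 1),
            ((nK K).choose k : ℝ) * u^k * (1-u)^(nK K - k) * g ((k:ℝ)/K)|
            * u ^ (s-1) * (1-u) ^ (t-1)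
          ≤ C * u ^ (s-1) * (1-u) ^ (t-1) := by
            apply mul_le_mul_of_nonneg_right _ hr2
            exact mul_le_mul_of_nonneg_right this hr1
        _ = C * (u ^ (s-1) * (1-u) ^ (t-1)) := by ring
    · exact (betaIntegrable hs ht).const_mul C
    · refine Filter.Eventually.of_forall fun u hu => ?_
      rw [Set.uIoc_of_le (by norm_num : (0:ℝ) ≤ 1)] at hu
      obtain ⟨hu0, hu1⟩ := hu
      exact ((binomial_lln x nK hn g hg C hbound u (le_of_lt hu0) hu1).mul_const
        (u ^ (s-1))).mul_const ((1-u) ^ (t-1))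
  have := hdct.const_mul (1 / betaFn s t)
  refine Tendsto.congr (fun K => ?_) this
  exact (sum_wBB_eq s t hs ht g (nK K) K).symm
end

section
/- For all real s,t > 0, the generator 𝓛 of the discrete dual process commutes with the SU(1,1) raising operator K⁺₁ + K⁺₂: for every function f : ℕ² → ℝ and all (n,m) ∈ ℕ², 𝓛((K⁺₁+K⁺₂)f)(n,m) = (K⁺₁+K⁺₂)(𝓛 f)(n,m), where 𝓛 f(n,m) = Σ_{k=0}^{n} Σ_{l=0}^{m} r_{s,t}(n,m;k,l) (f(n−k+l, m−l+k) − f(n,m)), K⁺₁ f(n,m) = (s+t+n) f(n+1,m) and K⁺₂ f(n,m) = (s+t+m) f(n,m+1). -/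
open Finset Real

/-- Generator of the discrete dual process:
`𝓛 f(n,m) = Σ_{k=0}^{n} Σ_{l=0}^{m} r_{s,t}(n,m;k,l) (f(n−k+l, m−l+k) − f(n,m))`. -/
noncomputable def discGen (s t : ℝ) (f : ℕ → ℕ → ℝ) (n m : ℕ) : ℝ :=
  ∑ k ∈ Finset.range (n + 1), ∑ l ∈ Finset.range (m + 1),
    rRate s t n m k l * (f (n - k + l) (m - l + k) - f n m)

/-- The SU(1,1) raising operator `K⁺₁+K⁺₂` acting on functions of two discrete variables:
`((K⁺₁+K⁺₂)f)(n,m) = (s+t+n) f(n+1,m) + (s+t+m) f(n,m+1)`. -/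
noncomputable def Kplus (s t : ℝ) (f : ℕ → ℕ → ℝ) (n m : ℕ) : ℝ :=
  (s + t + n) * f (n + 1) m + (s + t + m) * f n (m + 1)

lemma wBB_step (s t : ℝ) (hs : 0 < s) (ht : 0 < t) (n k : ℕ) (hk : k ≤ n + 1) :
    (s + t + n) * wBB s t (n + 1) k =
      (if k ≤ n then ((n : ℝ) - k + t) * wBB s t n k else 0) +
      (if 1 ≤ k then ((k : ℝ) - 1 + s) * wBB s t n (k - 1) else 0) := by
  have hA : Real.Gamma s ≠ 0 := (Real.Gamma_pos_of_pos hs).ne'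
  have hB : Real.Gamma t ≠ 0 := (Real.Gamma_pos_of_pos ht).ne'
  have hst : Real.Gamma (s + t) ≠ 0 := (Real.Gamma_pos_of_pos (by linarith)).ne'
  have hstn : Real.Gamma (s + t + n) ≠ 0 :=
    (Real.Gamma_pos_of_pos (by positivity)).ne'
  have hn1 : Real.Gamma ((n : ℝ) + 1) ≠ 0 :=
    (Real.Gamma_pos_of_pos (by positivity)).ne'
  rcases Nat.eq_zero_or_pos k with hk0 | hk1
  · subst hk0
    simp only [if_pos (Nat.zero_le n), if_neg (by omega : ¬ (1:ℕ) ≤ 0), add_zero, wBB,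
      Nat.sub_zero]
    push_cast
    rw [show (n:ℝ) + 1 + 1 = ((n:ℝ)+1) + 1 from by ring,
      Real.Gamma_add_one (by positivity : ((n:ℝ)+1) ≠ 0),
      show (n:ℝ) + 1 + t = ((n:ℝ)+t) + 1 from by ring,
      Real.Gamma_add_one (by positivity : ((n:ℝ)+t) ≠ 0),
      show s + t + ((n:ℝ) + 1) = (s+t+(n:ℝ)) + 1 from by ring,
      Real.Gamma_add_one (by positivity : (s+t+(n:ℝ)) ≠ 0)]
    have hat : Real.Gamma ((n:ℝ) + t) ≠ 0 := (Real.Gamma_pos_of_pos (by positivity)).ne'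
    field_simp
    ring
  · rcases (by omega : k = n + 1 ∨ k ≤ n) with hk2 | hk2
    · subst hk2
      simp only [if_neg (by omega : ¬ n + 1 ≤ n), if_pos (by omega : 1 ≤ n + 1), zero_add, wBB,
        Nat.sub_self, Nat.add_sub_cancel]
      push_cast
      rw [show (n:ℝ) + 1 + 1 = ((n:ℝ)+1) + 1 from by ring,
        Real.Gamma_add_one (by positivity : ((n:ℝ)+1) ≠ 0),
        show (n:ℝ) + 1 + s = ((n:ℝ)+s) + 1 from by ring,
        Real.Gamma_add_one (by positivity : ((n:ℝ)+s) ≠ 0),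
        show s + t + ((n:ℝ) + 1) = (s+t+(n:ℝ)) + 1 from by ring,
        Real.Gamma_add_one (by positivity : (s+t+(n:ℝ)) ≠ 0)]
      have has : Real.Gamma ((n:ℝ) + s) ≠ 0 := (Real.Gamma_pos_of_pos (by positivity)).ne'
      field_simp
      ring
    · obtain ⟨j, rfl⟩ : ∃ j, k = j + 1 := ⟨k - 1, by omega⟩
      obtain ⟨a, ha⟩ : ∃ a, n = j + 1 + a := ⟨n - (j+1), by omega⟩
      simp only [if_pos hk2, if_pos (by omega : 1 ≤ j + 1), Nat.add_sub_cancel,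
        show n + 1 - (j + 1) = a + 1 from by omega,
        show n - (j + 1) = a from by omega,
        show n - j = a + 1 from by omega, wBB]
      push_cast
      have hn : (n:ℝ) = (j:ℝ) + 1 + (a:ℝ) := by rw [ha]; push_cast; ring
      rw [show (n:ℝ) + 1 + 1 = ((n:ℝ)+1) + 1 from by ring,
        Real.Gamma_add_one (by positivity : ((n:ℝ)+1) ≠ 0),
        show (j:ℝ) + 1 + s = ((j:ℝ)+s) + 1 from by ring,
        Real.Gamma_add_one (by positivity : ((j:ℝ)+s) ≠ 0),
        show (a:ℝ) + 1 + t = ((a:ℝ)+t) + 1 from by ring,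
        Real.Gamma_add_one (by positivity : ((a:ℝ)+t) ≠ 0),
        show s + t + ((n:ℝ) + 1) = (s+t+(n:ℝ)) + 1 from by ring,
        Real.Gamma_add_one (by positivity : (s+t+(n:ℝ)) ≠ 0),
        show (j:ℝ) + 1 + 1 = ((j:ℝ)+1) + 1 from by ring,
        Real.Gamma_add_one (by positivity : ((j:ℝ)+1) ≠ 0),
        show (a:ℝ) + 1 + 1 = ((a:ℝ)+1) + 1 from by ring,
        Real.Gamma_add_one (by positivity : ((a:ℝ)+1) ≠ 0)]
      have h1 : Real.Gamma ((j:ℝ) + s) ≠ 0 := (Real.Gamma_pos_of_pos (by positivity)).ne'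
      have h2 : Real.Gamma ((a:ℝ) + t) ≠ 0 := (Real.Gamma_pos_of_pos (by positivity)).ne'
      have h3 : Real.Gamma ((j:ℝ) + 1) ≠ 0 := (Real.Gamma_pos_of_pos (by positivity)).ne'
      have h4 : Real.Gamma ((a:ℝ) + 1) ≠ 0 := (Real.Gamma_pos_of_pos (by positivity)).ne'
      rw [hn]
      field_simp
      ring

lemma wBB_sum (s t : ℝ) (hs : 0 < s) (ht : 0 < t) (n : ℕ) (g : ℕ → ℝ) :
    (s + t + n) * ∑ k ∈ Finset.range (n + 2), wBB s t (n + 1) k * g k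
      = ∑ k ∈ Finset.range (n + 1),
          wBB s t n k * (((n : ℝ) - k + t) * g k + ((k : ℝ) + s) * g (k + 1)) := by
  rw [Finset.mul_sum]
  have hsplit : ∀ k ∈ Finset.range (n + 2),
      (s + t + n) * (wBB s t (n + 1) k * g k) =
        (if k ≤ n then ((n : ℝ) - k + t) * wBB s t n k else 0) * g k +
        (if 1 ≤ k then ((k : ℝ) - 1 + s) * wBB s t n (k - 1) else 0) * g k := by
    intro k hk
    rw [Finset.mem_range] at hk
    rw [← mul_assoc, wBB_step s t hs ht n k (by omega), add_mul]
  rw [Finset.sum_congr rfl hsplit, Finset.sum_add_distrib]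
  have h1 : ∑ k ∈ Finset.range (n + 2),
      (if k ≤ n then ((n : ℝ) - k + t) * wBB s t n k else 0) * g k
      = ∑ k ∈ Finset.range (n + 1), ((n : ℝ) - k + t) * wBB s t n k * g k := by
    rw [Finset.sum_range_succ, if_neg (by omega : ¬ n + 1 ≤ n), zero_mul, add_zero]
    exact Finset.sum_congr rfl fun k hk => by
      rw [Finset.mem_range] at hk; rw [if_pos (by omega)]
  have h2 : ∑ k ∈ Finset.range (n + 2),
      (if 1 ≤ k then ((k : ℝ) - 1 + s) * wBB s t n (k - 1) else 0) * g k
      = ∑ k ∈ Finset.range (n + 1), ((k : ℝ) + s) * wBB s t n k * g (k + 1) := by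
    rw [Finset.sum_range_succ' (fun k =>
      (if 1 ≤ k then ((k : ℝ) - 1 + s) * wBB s t n (k - 1) else 0) * g k) (n+1)]
    simp only [if_neg (by omega : ¬ (1:ℕ) ≤ 0), zero_mul, add_zero,
      if_pos (by omega : ∀ {i : ℕ}, 1 ≤ i + 1), Nat.add_sub_cancel]
    exact Finset.sum_congr rfl fun k hk => by push_cast; ring
  rw [h1, h2, ← Finset.sum_add_distrib]
  exact Finset.sum_congr rfl fun k hk => by ring

/-- The generator of the discrete dual process commutes with the SU(1,1)
raising operator `K⁺₁ + K⁺₂`: `𝓛((K⁺₁+K⁺₂)f) = (K⁺₁+K⁺₂)(𝓛 f)`. -/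
theorem discrete_generator_commutes_with_raising
    (s t : ℝ) (hs : 0 < s) (ht : 0 < t) (f : ℕ → ℕ → ℝ) (n m : ℕ) :
    discGen s t (Kplus s t f) n m = Kplus s t (discGen s t f) n m := by
  have T1 : (s + t + (n:ℝ)) * discGen s t f (n+1) m
      = ∑ k ∈ Finset.range (n+1), ∑ l ∈ Finset.range (m+1),
          wBB s t n k * wBB s t m l *
            (((n:ℝ) - k + t) * (f (n+1-k+l) (m-l+k) - f (n+1) m)
             + ((k:ℝ) + s) * (f (n+1-(k+1)+l) (m-l+(k+1)) - f (n+1) m)) := by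
    unfold discGen rRate
    have e1 : ∀ k ∈ Finset.range (n+1+1),
        ∑ l ∈ Finset.range (m+1),
          wBB s t (n+1) k * wBB s t m l * (f (n+1-k+l) (m-l+k) - f (n+1) m)
        = wBB s t (n+1) k * ∑ l ∈ Finset.range (m+1),
            wBB s t m l * (f (n+1-k+l) (m-l+k) - f (n+1) m) := by
      intro k _
      rw [Finset.mul_sum]
      exact Finset.sum_congr rfl fun l _ => by ring
    rw [Finset.sum_congr rfl e1,
      wBB_sum s t hs ht n (fun k => ∑ l ∈ Finset.range (m+1),
        wBB s t m l * (f (n+1-k+l) (m-l+k) - f (n+1) m))]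
    refine Finset.sum_congr rfl fun k _ => ?_
    rw [Finset.mul_sum, Finset.mul_sum, ← Finset.sum_add_distrib, Finset.mul_sum]
    exact Finset.sum_congr rfl fun l _ => by ring
  have T2 : (s + t + (m:ℝ)) * discGen s t f n (m+1)
      = ∑ k ∈ Finset.range (n+1), ∑ l ∈ Finset.range (m+1),
          wBB s t n k * wBB s t m l *
            (((m:ℝ) - l + t) * (f (n-k+l) (m+1-l+k) - f n (m+1))
             + ((l:ℝ) + s) * (f (n-k+(l+1)) (m+1-(l+1)+k) - f n (m+1))) := by
    unfold discGen rRate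
    rw [Finset.mul_sum]
    refine Finset.sum_congr rfl fun k _ => ?_
    have e1 : ∑ l ∈ Finset.range (m+1+1),
        wBB s t n k * wBB s t (m+1) l * (f (n-k+l) (m+1-l+k) - f n (m+1))
        = wBB s t n k * ∑ l ∈ Finset.range (m+2),
            wBB s t (m+1) l * (f (n-k+l) (m+1-l+k) - f n (m+1)) := by
      rw [Finset.mul_sum]
      exact Finset.sum_congr rfl fun l _ => by ring
    rw [e1, ← mul_assoc, mul_comm (s+t+(m:ℝ)) (wBB s t n k), mul_assoc,
      wBB_sum s t hs ht m (fun l => f (n-k+l) (m+1-l+k) - f n (m+1))]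
    rw [Finset.mul_sum]
    exact Finset.sum_congr rfl fun l _ => by ring
  have hK : Kplus s t (discGen s t f) n m
      = (s + t + (n:ℝ)) * discGen s t f (n+1) m + (s + t + (m:ℝ)) * discGen s t f n (m+1) := rfl
  rw [hK, T1, T2, ← Finset.sum_add_distrib]
  unfold discGen rRate
  refine Finset.sum_congr rfl fun k hk => ?_
  rw [Finset.mem_range] at hk
  rw [← Finset.sum_add_distrib]
  refine Finset.sum_congr rfl fun l hl => ?_
  rw [Finset.mem_range] at hl
  have e1 : n + 1 - k + l = n - k + l + 1 := by omega
  have e2 : n + 1 - (k + 1) + l = n - k + l := by omega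
  have e3 : m + 1 - l + k = m - l + k + 1 := by omega
  have e4 : m + 1 - (l + 1) + k = m - l + k := by omega
  have e5 : n - k + (l + 1) = n - k + l + 1 := by omega
  have e6 : m - l + (k + 1) = m - l + k + 1 := by omega
  have c1 : ((n - k + l : ℕ) : ℝ) = (n:ℝ) - k + l := by
    rw [Nat.cast_add, Nat.cast_sub (by omega : k ≤ n)]
  have c2 : ((m - l + k : ℕ) : ℝ) = (m:ℝ) - l + k := by
    rw [Nat.cast_add, Nat.cast_sub (by omega : l ≤ m)]
  simp only [Kplus, e1, e2, e3, e4, e5, e6, c1, c2]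
  ring
end

section
/- For all real s,t > 0, the generator 𝓛 of the discrete dual process commutes with the SU(1,1) lowering operator K⁻₁ + K⁻₂: for every function f : ℕ² → ℝ and all (n,m) ∈ ℕ², 𝓛((K⁻₁+K⁻₂)f)(n,m) = (K⁻₁+K⁻₂)(𝓛 f)(n,m), where 𝓛 f(n,m) = Σ_{k=0}^{n} Σ_{l=0}^{m} r_{s,t}(n,m;k,l) (f(n−k+l, m−l+k) − f(n,m)), K⁻₁ f(n,m) = n f(n−1,m) and K⁻₂ f(n,m) = m f(n,m−1) (with the convention that the term vanishes when the prefactor is 0). -/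
open Finset Real

/-- The SU(1,1) lowering operator `K⁻₁+K⁻₂` acting on functions of two discrete variables:
`((K⁻₁+K⁻₂)f)(n,m) = n f(n−1,m) + m f(n,m−1)` (terms vanish when the prefactor is 0;
`n−1` denotes truncated subtraction on ℕ). -/
noncomputable def Kminus (f : ℕ → ℕ → ℝ) (n m : ℕ) : ℝ :=
  (n : ℝ) * f (n - 1) m + (m : ℝ) * f n (m - 1)

/-! The weights `wBB s t n ·` are the beta-binomial distribution, so they sum to one and
`𝓛 = P - 1`, where `P f (n, m)` is the expectation of `f` after one redistribution step; it
suffices that `P` commutes with `K⁻`. The Gamma recurrence gives the Pascal-type identity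
`(n + 1 - k) w(n + 1, k) + (k + 1) w(n + 1, k + 1) = (n + 1) w(n, k)`: drawing from `n - 1`
particles is the same as drawing from `n` and then discarding a uniformly chosen one.
Applied in each coordinate, and with the particle removed from a site after the jump split
according to whether it stayed there or just arrived, this matches the terms of `P K⁻ f` with
those of `K⁻ P f`. -/

section BetaBinomial

variable {s t : ℝ}

lemma wBB_add_left (k d : ℕ) :
    wBB s t (k + d) k = Real.Gamma ((k : ℝ) + d + 1) * Real.Gamma (k + s) * Real.Gamma (d + t) *
      Real.Gamma (s + t) / (Real.Gamma s * Real.Gamma t * Real.Gamma (s + t + k + d) *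
        Real.Gamma (k + 1) * Real.Gamma (d + 1)) := by
  simp only [wBB, Nat.add_sub_cancel_left]
  push_cast
  ring_nf

lemma mul_wBB_add_one_left (hs : 0 < s) (ht : 0 < t) (k d : ℕ) :
    ((d : ℝ) + 1) * (s + t + k + d) * wBB s t (k + d + 1) k
      = ((k : ℝ) + d + 1) * (d + t) * wBB s t (k + d) k := by
  rw [show k + d + 1 = k + (d + 1) by omega, wBB_add_left, wBB_add_left]
  push_cast
  have hTrials : Real.Gamma ((k : ℝ) + (d + 1) + 1) = (k + d + 1) * Real.Gamma (k + d + 1) := by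
    rw [← Real.Gamma_add_one (by positivity)]; ring_nf
  have hFailWeight : Real.Gamma ((d : ℝ) + 1 + t) = (d + t) * Real.Gamma (d + t) := by
    rw [← Real.Gamma_add_one (by positivity)]; ring_nf
  have hNorm : Real.Gamma (s + t + k + (d + 1)) = (s + t + k + d) * Real.Gamma (s + t + k + d) := by
    rw [← Real.Gamma_add_one (by positivity)]; ring_nf
  have hFailCount : Real.Gamma ((d : ℝ) + 1 + 1) = (d + 1) * Real.Gamma (d + 1) :=
    Real.Gamma_add_one (by positivity)
  rw [hTrials, hFailWeight, hNorm, hFailCount]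
  field_simp

lemma mul_wBB_add_one_add_one (hs : 0 < s) (ht : 0 < t) (k d : ℕ) :
    ((k : ℝ) + 1) * (s + t + k + d) * wBB s t (k + d + 1) (k + 1)
      = ((k : ℝ) + d + 1) * (k + s) * wBB s t (k + d) k := by
  rw [show k + d + 1 = k + 1 + d by omega, wBB_add_left, wBB_add_left]
  push_cast
  have hTrials : Real.Gamma ((k : ℝ) + 1 + d + 1) = (k + d + 1) * Real.Gamma (k + d + 1) := by
    rw [← Real.Gamma_add_one (by positivity)]; ring_nf
  have hSuccWeight : Real.Gamma ((k : ℝ) + 1 + s) = (k + s) * Real.Gamma (k + s) := by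
    rw [← Real.Gamma_add_one (by positivity)]; ring_nf
  have hNorm : Real.Gamma (s + t + (k + 1) + d) = (s + t + k + d) * Real.Gamma (s + t + k + d) := by
    rw [← Real.Gamma_add_one (by positivity)]; ring_nf
  have hSuccCount : Real.Gamma ((k : ℝ) + 1 + 1) = (k + 1) * Real.Gamma (k + 1) :=
    Real.Gamma_add_one (by positivity)
  rw [hTrials, hSuccWeight, hNorm, hSuccCount]
  field_simp

lemma wBB_pascal (hs : 0 < s) (ht : 0 < t) {n k : ℕ} (hk : k ≤ n) :
    ((n - k : ℕ) + 1 : ℝ) * wBB s t (n + 1) k + ((k : ℝ) + 1) * wBB s t (n + 1) (k + 1)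
      = ((n : ℝ) + 1) * wBB s t n k := by
  obtain ⟨d, rfl⟩ := Nat.exists_eq_add_of_le hk
  have hfail := mul_wBB_add_one_left hs ht k d
  have hsucc := mul_wBB_add_one_add_one hs ht k d
  rw [Nat.add_sub_cancel_left]
  push_cast
  have : s + t + k + d ≠ 0 := by positivity
  apply mul_left_cancel₀ this
  linear_combination hfail + hsucc

lemma natCast_mul_sum_wBB_pred (hs : 0 < s) (ht : 0 < t) (n : ℕ) (g : ℕ → ℝ) :
    (n : ℝ) * ∑ k ∈ range (n - 1 + 1), wBB s t (n - 1) k * g k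
      = ∑ k ∈ range (n + 1), wBB s t n k * ((n - k : ℕ) * g k + k * g (k - 1)) := by
  cases n with
  | zero => simp
  | succ n =>
    have hstay : ∑ k ∈ range (n + 1 + 1), wBB s t (n + 1) k * ((n + 1 - k : ℕ) * g k)
        = ∑ k ∈ range (n + 1), wBB s t (n + 1) k * ((n - k : ℕ) + 1) * g k := by
      rw [sum_range_succ, Nat.sub_self, Nat.cast_zero, zero_mul, mul_zero, add_zero]
      refine sum_congr rfl fun k hk => ?_
      rw [Nat.succ_sub (Nat.le_of_lt_succ (mem_range.1 hk))]
      push_cast; ring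
    have hleave : ∑ k ∈ range (n + 1 + 1), wBB s t (n + 1) k * (k * g (k - 1))
        = ∑ k ∈ range (n + 1), wBB s t (n + 1) (k + 1) * ((k : ℝ) + 1) * g k := by
      rw [sum_range_succ']
      simp only [Nat.cast_zero, zero_mul, mul_zero, add_zero, Nat.add_sub_cancel, Nat.cast_succ]
      exact sum_congr rfl fun k _ => by ring
    simp only [mul_add, sum_add_distrib, Nat.add_sub_cancel, hstay, hleave]
    rw [← sum_add_distrib, Finset.mul_sum]
    refine sum_congr rfl fun k hk => ?_
    push_cast
    linear_combination -g k * wBB_pascal hs ht (Nat.le_of_lt_succ (mem_range.1 hk))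

lemma sum_wBB (hs : 0 < s) (ht : 0 < t) (n : ℕ) : ∑ k ∈ range (n + 1), wBB s t n k = 1 := by
  induction n with
  | zero =>
    simp only [zero_add, sum_range_one, wBB, Nat.cast_zero, Nat.sub_zero, add_zero, Real.Gamma_one,
      mul_one, one_mul]
    field_simp
  | succ n ih =>
    have h := natCast_mul_sum_wBB_pred hs ht (n + 1) fun _ => 1
    have hterm : ∀ k ∈ range (n + 1 + 1),
        wBB s t (n + 1) k * ((n + 1 - k : ℕ) * 1 + k * 1) = ((n : ℝ) + 1) * wBB s t (n + 1) k := by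
      intro k hk
      rw [Nat.cast_sub (Nat.le_of_lt_succ (mem_range.1 hk))]
      push_cast; ring
    rw [sum_congr rfl hterm, ← Finset.mul_sum, Nat.add_sub_cancel] at h
    simp only [mul_one, ih, Nat.cast_succ] at h
    exact mul_left_cancel₀ (by positivity) (h.symm.trans (mul_one _).symm)

end BetaBinomial

section Redistribution

variable {s t : ℝ}

noncomputable def redistribute (s t : ℝ) (f : ℕ → ℕ → ℝ) (n m : ℕ) : ℝ :=
  ∑ k ∈ range (n + 1), ∑ l ∈ range (m + 1), rRate s t n m k l * f (n - k + l) (m - l + k)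

lemma rRate_comm (n m k l : ℕ) : rRate s t n m k l = rRate s t m n l k := mul_comm _ _

lemma sum_rRate (hs : 0 < s) (ht : 0 < t) (n m : ℕ) :
    ∑ k ∈ range (n + 1), ∑ l ∈ range (m + 1), rRate s t n m k l = 1 := by
  simp only [rRate, ← Finset.mul_sum, sum_wBB hs ht, mul_one]

lemma discGen_eq_redistribute_sub (hs : 0 < s) (ht : 0 < t) (f : ℕ → ℕ → ℝ) (n m : ℕ) :
    discGen s t f n m = redistribute s t f n m - f n m := by
  simp only [discGen, redistribute, mul_sub, sum_sub_distrib, ← Finset.sum_mul,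
    sum_rRate hs ht, one_mul]

lemma redistribute_swap (f : ℕ → ℕ → ℝ) (n m : ℕ) :
    redistribute s t (fun a b => f b a) m n = redistribute s t f n m := by
  rw [redistribute, sum_comm]
  simp only [rRate_comm m n]
  rfl

lemma natCast_mul_redistribute_pred_left (hs : 0 < s) (ht : 0 < t) (f : ℕ → ℕ → ℝ) (n m : ℕ) :
    (n : ℝ) * redistribute s t f (n - 1) m
      = ∑ k ∈ range (n + 1), ∑ l ∈ range (m + 1), rRate s t n m k l *
          ((n - k : ℕ) * f (n - k - 1 + l) (m - l + k) + k * f (n - k + l) (m - l + k - 1)) := by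
  set G : ℕ → ℝ := fun k => ∑ l ∈ range (m + 1), wBB s t m l * f (n - k - 1 + l) (m - l + k)
    with hG
  have hsplit :
      redistribute s t f (n - 1) m = ∑ k ∈ range (n - 1 + 1), wBB s t (n - 1) k * G k := by
    simp only [redistribute, rRate, hG, Finset.mul_sum, mul_assoc, Nat.sub_right_comm n 1]
  have hshift (k : ℕ) (hk : k ≤ n) :
      (k : ℝ) * G (k - 1)
        = k * ∑ l ∈ range (m + 1), wBB s t m l * f (n - k + l) (m - l + k - 1) := by
    rcases Nat.eq_zero_or_pos k with rfl | hk0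
    · simp
    · have hn : n - (k - 1) - 1 = n - k := by omega
      have hm (l : ℕ) : m - l + (k - 1) = m - l + k - 1 := by omega
      simp only [hG, hn, hm]
  rw [hsplit, natCast_mul_sum_wBB_pred hs ht]
  refine sum_congr rfl fun k hk => ?_
  rw [hshift k (Nat.le_of_lt_succ (mem_range.1 hk)), Finset.mul_sum, Finset.mul_sum,
    ← sum_add_distrib, Finset.mul_sum]
  refine sum_congr rfl fun l _ => ?_
  rw [rRate]
  ring

lemma natCast_mul_redistribute_pred_right (hs : 0 < s) (ht : 0 < t) (f : ℕ → ℕ → ℝ) (n m : ℕ) :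
    (m : ℝ) * redistribute s t f n (m - 1)
      = ∑ k ∈ range (n + 1), ∑ l ∈ range (m + 1), rRate s t n m k l *
          ((m - l : ℕ) * f (n - k + l) (m - l - 1 + k) + l * f (n - k + l - 1) (m - l + k)) := by
  rw [← redistribute_swap, natCast_mul_redistribute_pred_left hs ht, sum_comm]
  refine sum_congr rfl fun k _ => sum_congr rfl fun l _ => ?_
  rw [rRate_comm]

lemma natCast_add_mul_pred (F : ℕ → ℝ) (a l : ℕ) :
    ((a + l : ℕ) : ℝ) * F (a + l - 1) = a * F (a - 1 + l) + l * F (a + l - 1) := by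
  cases a with
  | zero => simp
  | succ a =>
    rw [Nat.add_sub_cancel, add_right_comm, Nat.add_sub_cancel]
    push_cast; ring

lemma redistribute_Kminus (hs : 0 < s) (ht : 0 < t) (f : ℕ → ℕ → ℝ) (n m : ℕ) :
    redistribute s t (Kminus f) n m = Kminus (redistribute s t f) n m := by
  rw [Kminus, natCast_mul_redistribute_pred_left hs ht, natCast_mul_redistribute_pred_right hs ht,
    ← sum_add_distrib]
  refine sum_congr rfl fun k _ => ?_
  rw [← sum_add_distrib]
  refine sum_congr rfl fun l _ => ?_
  have hleft := natCast_add_mul_pred (f · (m - l + k)) (n - k) l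
  have hright := natCast_add_mul_pred (f (n - k + l) ·) (m - l) k
  beta_reduce at hleft hright
  rw [Kminus]
  linear_combination rRate s t n m k l * (hleft + hright)

end Redistribution

/-- The generator of the discrete dual process commutes with the SU(1,1)
lowering operator `K⁻₁ + K⁻₂`: `𝓛((K⁻₁+K⁻₂)f) = (K⁻₁+K⁻₂)(𝓛 f)`. -/
theorem discrete_generator_commutes_with_lowering
    (s t : ℝ) (hs : 0 < s) (ht : 0 < t) (f : ℕ → ℕ → ℝ) (n m : ℕ) :
    discGen s t (Kminus f) n m = Kminus (discGen s t f) n m := by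
  have hgen : discGen s t f = fun a b => redistribute s t f a b - f a b :=
    funext₂ (discGen_eq_redistribute_sub hs ht f)
  rw [discGen_eq_redistribute_sub hs ht, redistribute_Kminus hs ht, hgen]
  simp only [Kminus]
  ring
end

section
/- For all real s,t > 0, θ ∈ (0,1) and k ∈ ℕ, the discrete duality polynomials have geometric 'moments' with respect to the discrete Gamma distribution: Σ_{n≥k} (Γ(n+1)/Γ(n−k+1)) · (Γ(s+t)/Γ(s+t+k)) · (1−θ)^{s+t} θ^n Γ(s+t+n)/(Γ(s+t) n!) = (θ/(1−θ))^k. That is, Σ_n d_{s,t}(k,n) ν_θ^{s+t}(n) = ρ(θ)^k with ρ(θ) = θ/(1−θ). -/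
open Real

/-- Discrete duality polynomial `d_{s,t}(k,n) = Γ(n+1)Γ(s+t)/(Γ(n−k+1)Γ(s+t+k))` for
`n ≥ k`, and 0 for `n < k`. -/
noncomputable def dDisc (s t : ℝ) (k n : ℕ) : ℝ :=
  if k ≤ n then
    Real.Gamma ((n : ℝ) + 1) * Real.Gamma (s + t) /
      (Real.Gamma (((n - k : ℕ) : ℝ) + 1) * Real.Gamma (s + t + k))
  else 0

/-!
Shifting the summation index by `k`, the factorials `n!` cancel and the `n`-th term becomes
`(1-θ)^{s+t} θ^k` times the `m = n - k`-th term of the negative binomial series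
`∑ Γ(a+m)/(Γ(a) m!) θ^m = (1-θ)^{-a}` with `a = s+t+k`. That series is the binomial series
of `(1-θ)^{-a}`, whose coefficients `Ring.choose (a+m-1) m` are the rising factorials
`a(a+1)⋯(a+m-1)/m! = Γ(a+m)/(Γ(a) m!)`.
-/

open scoped Nat

namespace Real

theorem Gamma_add_nat_eq_ascPochhammer_mul {a : ℝ} (ha : ∀ m : ℕ, a ≠ -m) (n : ℕ) :
    Gamma (a + n) = (ascPochhammer ℝ n).eval a * Gamma a := by
  induction n with
  | zero => simp
  | succ n ih =>
    have hn : a + n ≠ 0 := fun h => ha n (by linarith)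
    rw [Nat.cast_succ, ← add_assoc, Gamma_add_one hn, ih, ascPochhammer_succ_right]
    simp only [Polynomial.eval_mul, Polynomial.eval_add, Polynomial.eval_X,
      Polynomial.eval_natCast]
    ring

theorem hasSum_ascPochhammer_div_factorial_mul_pow (a : ℝ) {x : ℝ} (hx : |x| < 1) :
    HasSum (fun n : ℕ => (ascPochhammer ℝ n).eval a / n ! * x ^ n) ((1 - x) ^ (-a)) := by
  have hx' : x ∈ Metric.eball (0 : ℝ) 1 := by
    rwa [Metric.mem_eball, edist_zero_right, enorm_eq_nnnorm, ENNReal.coe_lt_one_iff,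
      ← NNReal.coe_lt_one, coe_nnnorm, norm_eq_abs]
  have h := (one_div_one_sub_rpow_hasFPowerSeriesOnBall_zero a).hasSum hx'
  rw [zero_add, one_div, ← rpow_neg (by linarith [abs_lt.1 hx])] at h
  refine h.congr_fun fun n => ?_
  rw [FormalMultilinearSeries.ofScalars_apply_eq, smul_eq_mul, ← Ring.multichoose_eq,
    div_mul_eq_mul_div, div_eq_iff (by positivity), mul_right_comm, ← nsmul_eq_mul',
    Ring.factorial_nsmul_multichoose_eq_ascPochhammer, Polynomial.ascPochhammer_smeval_eq_eval]

theorem hasSum_Gamma_add_div_mul_pow {a : ℝ} (ha : ∀ m : ℕ, a ≠ -m) {x : ℝ}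
    (hx : |x| < 1) :
    HasSum (fun n : ℕ => Gamma (a + n) / (Gamma a * n !) * x ^ n) ((1 - x) ^ (-a)) :=
  (hasSum_ascPochhammer_div_factorial_mul_pow a hx).congr_fun fun n => by
    rw [Gamma_add_nat_eq_ascPochhammer_mul ha, mul_comm _ (Gamma a),
      mul_div_mul_left _ _ (Gamma_ne_zero ha)]

end Real

theorem dDisc_of_lt (s t : ℝ) {k n : ℕ} (h : n < k) : dDisc s t k n = 0 :=
  if_neg (Nat.not_le.2 h)

theorem dDisc_mul_nuDisc_add {s t : ℝ} (θ : ℝ) (hΓ : Gamma (s + t) ≠ 0) (k m : ℕ) :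
    dDisc s t k (m + k) * nuDisc s t θ (m + k) =
      (1 - θ) ^ (s + t) * θ ^ k *
        (Gamma (s + t + k + m) / (Gamma (s + t + k) * m !) * θ ^ m) := by
  rw [dDisc, if_pos le_add_self, nuDisc, Nat.add_sub_cancel, Gamma_nat_eq_factorial,
    Gamma_nat_eq_factorial, Nat.cast_add, ← add_assoc, add_right_comm _ (m : ℝ), pow_add]
  field_simp

/-- The discrete duality polynomials have geometric moments with respect to
the discrete Gamma distribution: `Σ_n d_{s,t}(k,n) ν_θ^{s+t}(n) = (θ/(1−θ))^k`. -/
theorem discrete_duality_polynomial_moments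
    (s t θ : ℝ) (hs : 0 < s) (ht : 0 < t) (hθ : θ ∈ Set.Ioo (0:ℝ) 1) (k : ℕ) :
    (∑' n : ℕ, dDisc s t k n * nuDisc s t θ n) = (θ / (1 - θ)) ^ k := by
  obtain ⟨h0, h1⟩ := hθ
  have hst : 0 < s + t := add_pos hs ht
  have h1θ : 0 < 1 - θ := sub_pos.2 h1
  have ha : ∀ m : ℕ, s + t + k ≠ -m := fun m => by
    have : (0 : ℝ) < s + t + k + m := by positivity
    linarith
  have hshift : HasSum (fun m : ℕ => dDisc s t k (m + k) * nuDisc s t θ (m + k))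
      ((1 - θ) ^ (s + t) * θ ^ k * (1 - θ) ^ (-(s + t + k))) := by
    simp only [dDisc_mul_nuDisc_add θ (Gamma_pos_of_pos hst).ne']
    exact (hasSum_Gamma_add_div_mul_pow ha (abs_lt.2 ⟨by linarith, h1⟩)).mul_left _
  have hsum :=
    (hasSum_nat_add_iff (f := fun n => dDisc s t k n * nuDisc s t θ n) k).1 hshift
  rw [Finset.sum_eq_zero fun n hn => by
    rw [dDisc_of_lt s t (Finset.mem_range.1 hn), zero_mul], add_zero] at hsum
  rw [hsum.tsum_eq, mul_comm ((1 - θ) ^ (s + t)), mul_assoc, ← rpow_add h1θ,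
    show s + t + -(s + t + k) = -(k : ℝ) by ring, rpow_neg h1θ.le, rpow_natCast, div_pow,
    div_eq_mul_inv]
end
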